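/- arXiv:2003.07061 — 11 statements merged into one kernel-verified Lean document; each statement's English description precedes it below -/
import Mathlib

section
/- For every real α ∈ (0, 1/2] and every natural number n, the sum ∑_{i=0}^{⌊αn⌋} C(n,i) of binomial coefficients is at most 2^{n·h(α)}, where h is the binary entropy function. -/
/-- The binary entropy function (all logarithms base 2). -/
noncomputable def binEntropy (x : ℝ) : ℝ :=
  -x * Real.logb 2 x - (1 - x) * Real.logb 2 (1 - x)

theorem sum_choose_le_two_rpow_entropy (α : ℝ) (h0 : 0 < α) (h1 : α ≤ 1 / 2) (n : ℕ) :
    (∑ i ∈ Finset.range (⌊α * (n : ℝ)⌋₊ + 1), (n.choose i : ℝ)) ≤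
      (2 : ℝ) ^ ((n : ℝ) * binEntropy α) := by
  have hB : (0:ℝ) < 1 - α := by linarith
  have hAB : α ≤ 1 - α := by linarith
  set m := ⌊α * (n : ℝ)⌋₊ with hm
  have hcn : α * (n:ℝ) ≤ (n:ℝ) := by nlinarith [Nat.cast_nonneg (α := ℝ) n]
  have hmn : m ≤ n := by
    calc m ≤ ⌊(n:ℝ)⌋₊ := Nat.floor_le_floor hcn
    _ = n := Nat.floor_natCast n
  set c := α * (n:ℝ) with hc
  have hc0 : 0 ≤ c := by positivity
  set w : ℝ := α ^ c * (1-α) ^ ((n:ℝ) - c) with hw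
  have hw0 : 0 < w := by positivity
  -- rewrite α^t * (1-α)^(n-t) as (1-α)^n * (α/(1-α))^t
  have hfact : ∀ t : ℝ, α ^ t * (1-α) ^ ((n:ℝ) - t)
      = (1-α) ^ (n:ℝ) * (α / (1-α)) ^ t := by
    intro t
    rw [Real.div_rpow h0.le hB.le, Real.rpow_sub hB]
    have hBt : (1-α) ^ t ≠ 0 := (Real.rpow_pos_of_pos hB t).ne'
    field_simp
  -- termwise: w ≤ α^i * (1-α)^(n-i) for i ≤ m
  have key : ∀ i ∈ Finset.range (m+1),
      (n.choose i : ℝ) * w ≤ (n.choose i : ℝ) * (α ^ i * (1-α) ^ (n - i)) := by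
    intro i hi
    have him : i ≤ m := Nat.lt_succ_iff.mp (Finset.mem_range.mp hi)
    have hin : i ≤ n := le_trans him hmn
    have hic : (i:ℝ) ≤ c := le_trans (Nat.cast_le.mpr him) (Nat.floor_le hc0)
    have hmono : (α / (1-α)) ^ c ≤ (α / (1-α)) ^ (i:ℝ) :=
      Real.rpow_le_rpow_of_exponent_ge (by positivity) ((div_le_one hB).mpr hAB) hic
    have h2 : w ≤ α ^ (i:ℝ) * (1-α) ^ ((n:ℝ) - (i:ℝ)) := by
      rw [hw, hfact, hfact]
      exact mul_le_mul_of_nonneg_left hmono (Real.rpow_nonneg hB.le _)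
    have h3 : α ^ (i:ℝ) * (1-α) ^ ((n:ℝ) - (i:ℝ)) = α ^ i * (1-α) ^ (n - i) := by
      rw [← Nat.cast_sub hin, Real.rpow_natCast, Real.rpow_natCast]
    exact mul_le_mul_of_nonneg_left (h3 ▸ h2) (Nat.cast_nonneg _)
  -- sum bound
  have hsum : (∑ i ∈ Finset.range (m + 1), (n.choose i : ℝ)) * w ≤ 1 := by
    rw [Finset.sum_mul]
    calc (∑ i ∈ Finset.range (m + 1), (n.choose i : ℝ) * w)
        ≤ ∑ i ∈ Finset.range (m + 1), (n.choose i : ℝ) * (α ^ i * (1-α) ^ (n - i)) :=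
          Finset.sum_le_sum key
      _ ≤ ∑ i ∈ Finset.range (n + 1), (n.choose i : ℝ) * (α ^ i * (1-α) ^ (n - i)) := by
          apply Finset.sum_le_sum_of_subset_of_nonneg
          · exact Finset.range_subset_range.mpr (by omega)
          · intro i _ _
            positivity
      _ = (α + (1-α)) ^ n := by
          rw [add_pow]
          apply Finset.sum_congr rfl
          intro i _
          ring
      _ = 1 := by norm_num
  -- identify 2^(n * binEntropy α) with w⁻¹
  have hent : (2:ℝ) ^ ((n:ℝ) * binEntropy α) = w⁻¹ := by
    have hlA : (2:ℝ) ^ (Real.logb 2 α) = α := Real.rpow_logb two_pos (by norm_num) h0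
    have hlB : (2:ℝ) ^ (Real.logb 2 (1-α)) = 1 - α := Real.rpow_logb two_pos (by norm_num) hB
    have hexp : (n:ℝ) * binEntropy α
        = Real.logb 2 α * (-c) + Real.logb 2 (1-α) * (-((n:ℝ) - c)) := by
      simp only [binEntropy, hc]
      ring
    rw [hexp, Real.rpow_add two_pos, Real.rpow_mul (by norm_num : (0:ℝ) ≤ 2),
      Real.rpow_mul (by norm_num : (0:ℝ) ≤ 2), hlA, hlB,
      Real.rpow_neg h0.le, Real.rpow_neg hB.le, hw, mul_inv]
  rw [hent, ← one_div]
  exact (le_div_iff₀ hw0).mpr hsum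
end

section
/- Let t ≥ 2 be an integer and let H be a finite hypergraph with VC-dimension d and at least t vertices. Then the VC-dimension of H^t satisfies d − t + 1 ≤ VC(H^t) ≤ γ_t·d, where γ_t = 1/(t·h^{-1}(1/t)). -/
/-- `A` is shattered by the hyperedge family `E`. -/
def Shatters {V : Type*} [DecidableEq V] (E : Finset (Finset V)) (A : Finset V) : Prop :=
  ∀ B ⊆ A, ∃ e ∈ E, A ∩ e = B

/-- The hypergraph with hyperedge family `E` has VC-dimension exactly `d`. -/
def IsVCDim {V : Type*} [DecidableEq V] (E : Finset (Finset V)) (d : ℕ) : Prop :=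
  (∃ A : Finset V, Shatters E A ∧ A.card = d) ∧
  ∀ A : Finset V, Shatters E A → A.card ≤ d

/-- The hyperedge family of the hypergraph `H^t`: its vertices are the `t`-element
subsets of `V`, and each hyperedge of `H` gives rise to the hyperedge consisting of all
its `t`-element subsets. -/
def HtEdges {V : Type*} [Fintype V] [DecidableEq V] (E : Finset (Finset V)) (t : ℕ) :
    Finset (Finset {s : Finset V // s.card = t}) :=
  E.image (fun e => Finset.univ.filter (fun s : {s : Finset V // s.card = t} => s.1 ⊆ e))

/-!
Lower bound: inside a set `A` shattered by `H`, fix `T ⊆ A` with `|T| = t - 1`. Each of the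
`t`-sets `T ∪ {a}`, `a ∈ A \ T`, contains a vertex that lies in no other one, so `H^t` shatters
all `|A| - t + 1` of them.

Upper bound: if `H^t` shatters `d'` many `t`-sets, their union `U` has at most `n = d' t`
vertices and the trace of `H` on `U` has at least `2^d'` members. By Sauer–Shelah and the entropy
bound for binomial tails, the trace has at most `∑_{k ≤ d} C(n, k) ≤ 2^(n h(d/n))` members, so
`h(d/n) ≥ 1/t = h(x)`, i.e. `d ≥ n x`.
-/

open Finset

lemma binEntropy_eq_div_log_two (p : ℝ) : binEntropy p = Real.binEntropy p / Real.log 2 := by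
  simp only [binEntropy, Real.binEntropy, Real.logb, Real.log_inv]
  ring

lemma binEntropy_strictMonoOn : StrictMonoOn binEntropy (Set.Icc 0 2⁻¹) := by
  intro a ha b hb hab
  simp only [binEntropy_eq_div_log_two]
  exact div_lt_div_of_pos_right (Real.binEntropy_strictMonoOn ha hb hab)
    (Real.log_pos one_lt_two)

lemma two_rpow_neg_mul_binEntropy {p : ℝ} (hp0 : 0 < p) (hp1 : p < 1) (n : ℝ) :
    (2 : ℝ) ^ (-(n * binEntropy p)) = (1 - p) ^ n * (p / (1 - p)) ^ (n * p) := by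
  have hq : 0 < 1 - p := by linarith
  have two_rpow_mul_logb : ∀ q > 0, ∀ a : ℝ, (2 : ℝ) ^ (a * Real.logb 2 q) = q ^ a := by
    intro q hq a
    rw [mul_comm, Real.rpow_mul zero_le_two, Real.rpow_logb zero_lt_two one_lt_two.ne' hq]
  have hexp : -(n * binEntropy p) = n * p * Real.logb 2 p + (n - n * p) * Real.logb 2 (1 - p) := by
    simp only [binEntropy]; ring
  rw [hexp, Real.rpow_add zero_lt_two, two_rpow_mul_logb p hp0, two_rpow_mul_logb _ hq,
    Real.rpow_sub hq, Real.div_rpow hp0.le hq.le]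
  ring

lemma two_rpow_neg_mul_binEntropy_le {p : ℝ} (hp0 : 0 < p) (hp : p ≤ 1 / 2) {n k : ℕ}
    (hkn : k ≤ n) (hk : (k : ℝ) ≤ n * p) :
    (2 : ℝ) ^ (-(n * binEntropy p)) ≤ p ^ k * (1 - p) ^ (n - k) := by
  have hq : 0 < 1 - p := by linarith
  have hratio : p ^ k * (1 - p) ^ (n - k) = (1 - p) ^ n * (p / (1 - p)) ^ k := by
    rw [div_pow, ← Nat.sub_add_cancel hkn, pow_add]
    field_simp
    rw [Nat.add_sub_cancel]
  rw [two_rpow_neg_mul_binEntropy hp0 (by linarith), hratio, Real.rpow_natCast,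
    ← Real.rpow_natCast (p / (1 - p))]
  exact mul_le_mul_of_nonneg_left
    (Real.rpow_le_rpow_of_exponent_ge (div_pos hp0 hq) ((div_le_one hq).2 (by linarith)) hk)
    (by positivity)

lemma sum_choose_le_two_rpow_mul_binEntropy {p : ℝ} (hp0 : 0 ≤ p) (hp : p ≤ 1 / 2) {n d : ℕ}
    (hd : (d : ℝ) ≤ n * p) :
    ∑ k ∈ Iic d, (n.choose k : ℝ) ≤ 2 ^ (n * binEntropy p) := by
  rcases hp0.eq_or_lt with rfl | hp0
  · simp only [mul_zero, Nat.cast_nonpos] at hd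
    subst hd
    simp [binEntropy, ← Nat.range_succ_eq_Iic]
  have hdn : d ≤ n := by
    exact_mod_cast hd.trans (mul_le_of_le_one_right n.cast_nonneg (by linarith))
  rw [← inv_inv ((2 : ℝ) ^ _), ← Real.rpow_neg zero_le_two, ← one_div, le_div_iff₀ (by positivity),
    sum_mul]
  calc ∑ k ∈ Iic d, (n.choose k : ℝ) * 2 ^ (-(n * binEntropy p))
      ≤ ∑ k ∈ Iic d, (n.choose k : ℝ) * (p ^ k * (1 - p) ^ (n - k)) := by
        gcongr with k hk
        have hkd : k ≤ d := mem_Iic.1 hk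
        exact two_rpow_neg_mul_binEntropy_le hp0 hp (hkd.trans hdn) ((Nat.cast_le.2 hkd).trans hd)
    _ ≤ ∑ k ∈ range (n + 1), p ^ k * (1 - p) ^ (n - k) * (n.choose k : ℝ) := by
        simp_rw [mul_comm (n.choose _ : ℝ)]
        refine sum_le_sum_of_subset_of_nonneg (fun k hk ↦ ?_) fun k _ _ ↦ ?_
        · exact mem_range.2 (Nat.lt_succ_of_le ((mem_Iic.1 hk).trans hdn))
        · have : 0 ≤ 1 - p := by linarith
          positivity
    _ = 1 := by rw [← add_pow, add_sub_cancel, one_pow]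

lemma card_image_inter_le_sum_choose {α : Type*} [DecidableEq α] {𝒜 : Finset (Finset α)} {d : ℕ}
    (h𝒜 : ∀ s, 𝒜.Shatters s → #s ≤ d) (U : Finset α) :
    #(𝒜.image (U ∩ ·)) ≤ ∑ k ∈ Iic d, (#U).choose k := by
  simp_rw [← card_powersetCard]
  refine (card_le_card_shatterer _).trans <|
    (card_le_card fun s hs ↦ mem_biUnion.2 ⟨#s, ?_⟩).trans card_biUnion_le
  rw [mem_shatterer] at hs
  have hsU : s ⊆ U := by
    obtain ⟨_, hu, hsu⟩ := hs.exists_superset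
    obtain ⟨e, -, rfl⟩ := mem_image.1 hu
    exact hsu.trans inter_subset_left
  have hs𝒜 : 𝒜.Shatters s := fun B hB ↦ by
    obtain ⟨_, hu, hsu⟩ := hs hB
    obtain ⟨e, he, rfl⟩ := mem_image.1 hu
    exact ⟨e, he, by rwa [← inter_assoc, inter_eq_left.2 hsU] at hsu⟩
  exact ⟨mem_Iic.2 (h𝒜 s hs𝒜), mem_powersetCard.2 ⟨hsU, rfl⟩⟩

section HtEdges

variable {V : Type*} [Fintype V] [DecidableEq V] {E : Finset (Finset V)} {t : ℕ}

lemma shatters_htEdges_of_exists_private_mem {A : Finset V} (hA : E.Shatters A)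
    {𝒮 : Finset {s : Finset V // #s = t}} (hsub : ∀ s ∈ 𝒮, s.1 ⊆ A)
    (hprivate : ∀ s ∈ 𝒮, ∃ a ∈ s.1, ∀ s' ∈ 𝒮, a ∈ s'.1 → s' = s) :
    (HtEdges E t).Shatters 𝒮 := by
  intro ℬ hℬ
  obtain ⟨e, he, hAe⟩ := hA (biUnion_subset.2 fun s hs ↦ hsub s (hℬ hs) : ℬ.biUnion (·.1) ⊆ A)
  refine ⟨univ.filter (·.1 ⊆ e), mem_image_of_mem _ he, ?_⟩
  ext s
  simp only [mem_inter, mem_filter, mem_univ, true_and]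
  constructor
  · rintro ⟨hs, hse⟩
    obtain ⟨a, has, hunique⟩ := hprivate s hs
    obtain ⟨s', hs'ℬ, has'⟩ := mem_biUnion.1 (hAe ▸ mem_inter.2 ⟨hsub s hs has, hse has⟩)
    exact hunique s' (hℬ hs'ℬ) has' ▸ hs'ℬ
  · intro hs
    exact ⟨hℬ hs, (subset_biUnion_of_mem (·.1) hs).trans (hAe ▸ inter_subset_right)⟩

lemma exists_shatters_htEdges_card_add_eq {A : Finset V} (hA : E.Shatters A) (ht : 0 < t)
    (htA : t ≤ #A + 1) :
    ∃ 𝒮 : Finset {s : Finset V // #s = t}, (HtEdges E t).Shatters 𝒮 ∧ #𝒮 + t = #A + 1 := by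
  obtain ⟨T, hTA, hT⟩ := exists_subset_card_eq (show t - 1 ≤ #A by omega)
  have hcard (a : {a // a ∈ A \ T}) : #(insert a.1 T) = t := by
    rw [card_insert_of_notMem (mem_sdiff.1 a.2).2, hT]; omega
  let star (a : {a // a ∈ A \ T}) : {s : Finset V // #s = t} := ⟨insert a.1 T, hcard a⟩
  have mem_star_iff (a b : {a // a ∈ A \ T}) : a.1 ∈ (star b).1 ↔ a = b := by
    rw [show (star b).1 = insert b.1 T from rfl, mem_insert, or_iff_left (mem_sdiff.1 a.2).2,
      Subtype.ext_iff]
  have star_injective : Function.Injective star := fun a b hab ↦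
    (mem_star_iff a b).1 (hab ▸ mem_insert_self _ _)
  refine ⟨(A \ T).attach.image star, shatters_htEdges_of_exists_private_mem hA ?_ ?_, ?_⟩
  · simp only [mem_image, forall_exists_index, and_imp]
    rintro _ a - rfl
    exact insert_subset (mem_sdiff.1 a.2).1 hTA
  · simp only [mem_image, forall_exists_index, and_imp]
    rintro _ a - rfl
    refine ⟨a, mem_insert_self _ _, ?_⟩
    rintro _ b - rfl hab
    rw [(mem_star_iff a b).1 hab]
  · rw [card_image_of_injective _ star_injective, card_attach, card_sdiff_of_subset hTA, hT]
    omega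

lemma two_pow_card_le_card_image_inter {𝒮 : Finset {s : Finset V // #s = t}}
    (h𝒮 : (HtEdges E t).Shatters 𝒮) : 2 ^ #𝒮 ≤ #(E.image (𝒮.biUnion (·.1) ∩ ·)) := by
  rw [← card_powerset, ← shatters_iff.1 h𝒮]
  calc #((HtEdges E t).image (𝒮 ∩ ·))
      = #((E.image (𝒮.biUnion (·.1) ∩ ·)).image fun w ↦ 𝒮.filter (·.1 ⊆ w)) := by
        rw [HtEdges, image_image, image_image]
        congr 1
        refine image_congr fun e _ ↦ ?_
        ext s
        simp only [Function.comp, mem_inter, mem_filter, mem_univ, true_and, subset_inter_iff]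
        exact ⟨fun h ↦ ⟨h.1, subset_biUnion_of_mem (·.1) h.1, h.2⟩, fun h ↦ ⟨h.1, h.2.2⟩⟩
    _ ≤ _ := card_image_le

lemma two_pow_card_le_sum_choose {d : ℕ} (hE : ∀ A, E.Shatters A → #A ≤ d)
    {𝒮 : Finset {s : Finset V // #s = t}} (h𝒮 : (HtEdges E t).Shatters 𝒮) :
    2 ^ #𝒮 ≤ ∑ k ∈ Iic d, (#𝒮 * t).choose k :=
  (two_pow_card_le_card_image_inter h𝒮).trans <| (card_image_inter_le_sum_choose hE _).trans <|
    sum_le_sum fun k _ ↦ Nat.choose_le_choose k <|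
      card_biUnion_le_card_mul _ _ _ fun s _ ↦ s.2.le

lemma card_mul_mul_le_of_shatters_htEdges {d : ℕ} (hE : ∀ A, E.Shatters A → #A ≤ d)
    {𝒮 : Finset {s : Finset V // #s = t}} (h𝒮 : (HtEdges E t).Shatters 𝒮) (ht : 0 < t)
    {x : ℝ} (hx : x ∈ Set.Ioc 0 (1 / 2)) (hxe : binEntropy x = 1 / t) :
    (#𝒮 : ℝ) * t * x ≤ d := by
  obtain ⟨n, hn⟩ : ∃ n : ℕ, n = #𝒮 * t := ⟨_, rfl⟩
  have hn' : (n : ℝ) = #𝒮 * t := by rw [hn, Nat.cast_mul]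
  rw [← hn']
  rcases le_or_gt (n : ℝ) (2 * d) with hnd | hnd
  · nlinarith [hx.2, (n.cast_nonneg : (0 : ℝ) ≤ n)]
  have hn0 : (0 : ℝ) < n := by linarith [d.cast_nonneg (α := ℝ)]
  set p : ℝ := d / n
  have hp : p ∈ Set.Icc 0 2⁻¹ := ⟨by positivity, by rw [div_le_iff₀ hn0]; linarith⟩
  have hdp : (d : ℝ) = n * p := (mul_div_cancel₀ _ hn0.ne').symm
  have hcount : (2 : ℝ) ^ (#𝒮 : ℝ) ≤ 2 ^ (n * binEntropy p) := by
    calc (2 : ℝ) ^ (#𝒮 : ℝ) = ((2 ^ #𝒮 : ℕ) : ℝ) := by push_cast; exact Real.rpow_natCast _ _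
      _ ≤ ((∑ k ∈ Iic d, n.choose k : ℕ) : ℝ) :=
        Nat.cast_le.2 (hn ▸ two_pow_card_le_sum_choose hE h𝒮)
      _ ≤ 2 ^ (n * binEntropy p) := by
        push_cast
        exact sum_choose_le_two_rpow_mul_binEntropy hp.1 (by linarith [hp.2]) hdp.le
  rw [Real.rpow_le_rpow_left_iff one_lt_two, hn', mul_assoc] at hcount
  have hS : (0 : ℝ) < #𝒮 := pos_of_mul_pos_left (hn' ▸ hn0) (by positivity)
  have hxp : binEntropy x ≤ binEntropy p := by
    rw [hxe, div_le_iff₀ (by positivity)]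
    nlinarith
  rw [hdp]
  exact mul_le_mul_of_nonneg_left
    ((binEntropy_strictMonoOn.le_iff_le ⟨hx.1.le, by linarith [hx.2]⟩ hp).1 hxp) hn0.le

end HtEdges

theorem vcDim_Ht_bounds_general {V : Type*} [Fintype V] [DecidableEq V] (E : Finset (Finset V))
    (t : ℕ) (ht : 2 ≤ t) (d : ℕ) (hvc : IsVCDim E d)
    -- `x = h⁻¹(1/t)`, so that `γ_t = 1/(t*x)`
    (x : ℝ) (hx : x ∈ Set.Ioc (0 : ℝ) (1 / 2)) (hxe : binEntropy x = 1 / (t : ℝ))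
    (d' : ℕ) (hvc' : IsVCDim (HtEdges E t) d') :
    (d : ℝ) - (t : ℝ) + 1 ≤ (d' : ℝ) ∧ (d' : ℝ) ≤ (1 / ((t : ℝ) * x)) * (d : ℝ) := by
  obtain ⟨⟨A, hA, rfl⟩, hE⟩ := hvc
  obtain ⟨⟨𝒮, h𝒮, rfl⟩, hHt⟩ := hvc'
  have ht0 : 0 < t := by omega
  refine ⟨?_, ?_⟩
  · rcases lt_or_ge (#A + 1) t with hAt | htA
    · have : (#A : ℝ) + 1 < t := by exact_mod_cast hAt
      linarith [(#𝒮).cast_nonneg (α := ℝ)]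
    · obtain ⟨𝒯, h𝒯, hcard⟩ := exists_shatters_htEdges_card_add_eq hA ht0 htA
      have : (#𝒯 : ℝ) + t = #A + 1 := by exact_mod_cast hcard
      have : (#𝒯 : ℝ) ≤ #𝒮 := by exact_mod_cast hHt 𝒯 h𝒯
      linarith
  · rw [one_div, inv_mul_eq_div, le_div_iff₀ (by positivity [hx.1]), ← mul_assoc]
    exact card_mul_mul_le_of_shatters_htEdges hE h𝒮 ht0 hx hxe

theorem vcDim_Ht_bounds {V : Type*} [Fintype V] [DecidableEq V] (E : Finset (Finset V))
    (t : ℕ) (ht : 2 ≤ t) (htV : t ≤ Fintype.card V) (d : ℕ) (hvc : IsVCDim E d)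
    -- `x = h⁻¹(1/t)`, so that `γ_t = 1/(t*x)`
    (x : ℝ) (hx : x ∈ Set.Ioc (0 : ℝ) (1 / 2)) (hxe : binEntropy x = 1 / (t : ℝ))
    (d' : ℕ) (hvc' : IsVCDim (HtEdges E t) d') :
    (d : ℝ) - (t : ℝ) + 1 ≤ (d' : ℝ) ∧ (d' : ℝ) ≤ (1 / ((t : ℝ) * x)) * (d : ℝ) :=
  vcDim_Ht_bounds_general E t ht d hvc x hx hxe d' hvc'
end

section
/- Let H = (V,E) be a finite hypergraph on n vertices, let t ≥ 1 be an integer and let ε ∈ (0,1) satisfy n ≥ 2t/ε. Then every (ε/2)^t-net for the hypergraph H^t, regarded as a family of t-element subsets of V, is an ε-t-net for H. -/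
/-- `S` is an `ε`-`t`-net for the hypergraph with vertex set `V` and hyperedges `E`. -/
def IsEpsTNet {V : Type*} [Fintype V] (E : Finset (Finset V)) (ε : ℝ) (t : ℕ)
    (S : Finset (Finset V)) : Prop :=
  (∀ s ∈ S, s.card = t) ∧
  ∀ e ∈ E, ε * (Fintype.card V : ℝ) ≤ (e.card : ℝ) → ∃ s ∈ S, s ⊆ e

/-!
An edge `e` of `H` with `|e| ≥ εn` becomes the edge of `H^t` of all `t`-subsets of `e`, of
size `C(|e|, t)` among `C(n, t)` vertices. Comparing the falling factorials factor by factor,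
`|e| - i ≥ εn - t ≥ εn/2 ≥ (ε/2)(n - i)` for `i < t` because `2t ≤ εn`; hence
`C(|e|, t) ≥ (ε/2)^t C(n, t)`, so the `(ε/2)^t`-net of `H^t` picks a `t`-subset of `e`.
-/

theorem pow_mul_descFactorial_le_descFactorial {c : ℝ} (hc : 0 ≤ c) {m n t : ℕ}
    (h : ∀ i < t, c * ((n - i : ℕ) : ℝ) ≤ ((m - i : ℕ) : ℝ)) :
    c ^ t * n.descFactorial t ≤ m.descFactorial t := by
  induction t with
  | zero => simp
  | succ k ih =>
    have ih := ih fun i hi => h i (Nat.lt_succ_of_lt hi)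
    calc c ^ (k + 1) * n.descFactorial (k + 1)
        = (c * ((n - k : ℕ) : ℝ)) * (c ^ k * n.descFactorial k) := by
          rw [Nat.descFactorial_succ]; push_cast; ring
      _ ≤ ((m - k : ℕ) : ℝ) * m.descFactorial k := by
          gcongr
          exact h k k.lt_succ_self
      _ = m.descFactorial (k + 1) := by rw [Nat.descFactorial_succ]; push_cast; ring

theorem pow_mul_choose_le_choose {c : ℝ} (hc : 0 ≤ c) {m n t : ℕ}
    (h : ∀ i < t, c * ((n - i : ℕ) : ℝ) ≤ ((m - i : ℕ) : ℝ)) :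
    c ^ t * n.choose t ≤ m.choose t := by
  have hdesc := pow_mul_descFactorial_le_descFactorial hc h
  simp only [Nat.descFactorial_eq_factorial_mul_choose, Nat.cast_mul] at hdesc
  have ht : (0 : ℝ) < t.factorial := by positivity
  nlinarith

theorem half_pow_mul_choose_le_choose {ε : ℝ} (hε : 0 ≤ ε) {m n t : ℕ}
    (hm : ε * n ≤ m) (ht : 2 * (t : ℝ) ≤ ε * n) :
    (ε / 2) ^ t * n.choose t ≤ m.choose t := by
  refine pow_mul_choose_le_choose (by positivity) fun i hi => ?_
  have hi : (i : ℝ) < t := by exact_mod_cast hi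
  have hin : ((n - i : ℕ) : ℝ) ≤ n := by exact_mod_cast n.sub_le i
  have him : i ≤ m := by exact_mod_cast (show (i : ℝ) ≤ m by linarith)
  rw [Nat.cast_sub him]
  nlinarith

theorem card_filter_val_subset_eq_choose {V : Type*} [Fintype V] [DecidableEq V] (t : ℕ) (e : Finset V) :
    (Finset.univ.filter fun s : {s : Finset V // s.card = t} => s.1 ⊆ e).card =
      e.card.choose t := by
  rw [← Finset.card_powersetCard t e]
  refine Finset.card_bij (fun s _ => s.1) (fun s hs => ?_) (fun _ _ _ _ => Subtype.ext)
    fun s hs => ?_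
  · exact Finset.mem_powersetCard.mpr ⟨(Finset.mem_filter.mp hs).2, s.2⟩
  · obtain ⟨hse, hst⟩ := Finset.mem_powersetCard.mp hs
    exact ⟨⟨s, hst⟩, by simpa using hse, rfl⟩

theorem eps_net_of_Ht_is_eps_t_net_general {V : Type*} [Fintype V] [DecidableEq V]
    (E : Finset (Finset V)) (t : ℕ) (ε : ℝ) (hε : ε ∈ Set.Ioo (0 : ℝ) 1)
    (hn : 2 * (t : ℝ) / ε ≤ (Fintype.card V : ℝ))
    (N : Finset {s : Finset V // s.card = t})
    (hN : ∀ e' ∈ HtEdges E t,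
      (ε / 2) ^ t * (Fintype.card {s : Finset V // s.card = t} : ℝ) ≤ (e'.card : ℝ) →
      ∃ s ∈ N, s ∈ e') :
    IsEpsTNet E ε t (N.image (fun s => s.1)) := by
  have hε0 := hε.1
  have htn : 2 * (t : ℝ) ≤ ε * Fintype.card V := by rwa [div_le_iff₀' hε0] at hn
  refine ⟨fun s hs => ?_, fun e he he_large => ?_⟩
  · obtain ⟨s, -, rfl⟩ := Finset.mem_image.mp hs
    exact s.2
  · obtain ⟨s, hsN, hse⟩ := hN _ (Finset.mem_image_of_mem _ he) <| by
      rw [Fintype.card_finset_len, card_filter_val_subset_eq_choose]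
      exact half_pow_mul_choose_le_choose hε0.le he_large htn
    exact ⟨s.1, Finset.mem_image_of_mem _ hsN, (Finset.mem_filter.mp hse).2⟩

theorem eps_net_of_Ht_is_eps_t_net {V : Type*} [Fintype V] [DecidableEq V]
    (E : Finset (Finset V)) (t : ℕ) (ht : 1 ≤ t) (ε : ℝ) (hε : ε ∈ Set.Ioo (0 : ℝ) 1)
    (hn : 2 * (t : ℝ) / ε ≤ (Fintype.card V : ℝ))
    (N : Finset {s : Finset V // s.card = t})
    (hN : ∀ e' ∈ HtEdges E t,
      (ε / 2) ^ t * (Fintype.card {s : Finset V // s.card = t} : ℝ) ≤ (e'.card : ℝ) →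
      ∃ s ∈ N, s ∈ e') :
    IsEpsTNet E ε t (N.image (fun s => s.1)) :=
  eps_net_of_Ht_is_eps_t_net_general E t ε hε hn N hN
end

section
/- Let H = (V,E) be a finite hypergraph with VC-dimension d ≥ 1 and let S ∈ E be a hyperedge with |S| ≥ d+1. Assume that for every (d+1)-element subset X of S there is a hyperedge of H disjoint from X (i.e., ∅ ∈ Π_H(X)). Then there exist an integer i ∈ {1,…,d} and an i-element subset A ⊆ S such that A stabs at least C(|S|,d+1)/(d·C(|S|,i)) subsets B ⊆ S∖A of cardinality d+1−i. -/
/-- `A` stabs `B`: every hyperedge containing `B` meets `A`. -/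
def Stabs {V : Type*} [DecidableEq V] (E : Finset (Finset V)) (A B : Finset V) : Prop :=
  ∀ e ∈ E, B ⊆ e → (e ∩ A).Nonempty

instance {V : Type*} [DecidableEq V] (E : Finset (Finset V)) (A B : Finset V) :
    Decidable (Stabs E A B) :=
  inferInstanceAs (Decidable (∀ e ∈ E, B ⊆ e → (e ∩ A).Nonempty))

theorem stabbing_lemma {V : Type*} [Fintype V] [DecidableEq V] (E : Finset (Finset V))
    (d : ℕ) (hd : 1 ≤ d) (hvc : IsVCDim E d) (S : Finset V) (hS : S ∈ E)
    (hcard : d + 1 ≤ S.card)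
    (hempty : ∀ X ⊆ S, X.card = d + 1 → ∃ e ∈ E, X ∩ e = ∅) :
    ∃ i ∈ Finset.Icc 1 d, ∃ A ⊆ S, A.card = i ∧
      (S.card.choose (d + 1) : ℝ) / ((d : ℝ) * (S.card.choose i : ℝ)) ≤
        ((((S \ A).powersetCard (d + 1 - i)).filter (fun B => Stabs E A B)).card : ℝ) := by
  classical
  set n := S.card with hn
  -- Step 1: choice of a missing trace set for each (d+1)-subset X of S
  have key : ∀ X : Finset V, ∃ B : Finset V,
      X ∈ S.powersetCard (d + 1) →
      B ⊆ X ∧ B.Nonempty ∧ B ≠ X ∧ Stabs E (X \ B) B := by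
    intro X
    by_cases hX : X ∈ S.powersetCard (d + 1)
    · rw [Finset.mem_powersetCard] at hX
      obtain ⟨hXS, hXc⟩ := hX
      have hnsh : ¬ Shatters E X := by
        intro h
        have := hvc.2 X h
        omega
      rw [Shatters] at hnsh
      push_neg at hnsh
      obtain ⟨B, hBX, hB⟩ := hnsh
      refine ⟨B, fun _ => ⟨hBX, ?_, ?_, ?_⟩⟩
      · rcases Finset.eq_empty_or_nonempty B with rfl | h
        · obtain ⟨e, he, hXe⟩ := hempty X hXS hXc
          exact absurd hXe (hB e he)
        · exact h
      · intro hBeq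
        exact hB S hS (by rw [Finset.inter_eq_left.mpr hXS, hBeq])
      · intro e he hBe
        have hsub : B ⊆ X ∩ e := Finset.subset_inter hBX hBe
        have hne : X ∩ e ≠ B := hB e he
        obtain ⟨x, hx, hxB⟩ := Finset.exists_of_ssubset ⟨hsub, fun h => hne (le_antisymm h hsub)⟩
        rw [Finset.mem_inter] at hx
        exact ⟨x, Finset.mem_inter.mpr ⟨hx.2, Finset.mem_sdiff.mpr ⟨hx.1, hxB⟩⟩⟩
    · exact ⟨∅, fun h => absurd h hX⟩
  choose g hg using key
  -- Step 2: the target finset of pairs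
  set T : Finset (Finset V × Finset V) :=
    (S.powerset ×ˢ S.powerset).filter (fun p =>
      p.1.card ∈ Finset.Icc 1 d ∧ p.2 ⊆ S \ p.1 ∧ p.2.card = d + 1 - p.1.card ∧
        Stabs E p.1 p.2) with hT
  -- properties of the pairing map
  have hpair : ∀ X ∈ S.powersetCard (d + 1), (X \ g X, g X) ∈ T := by
    intro X hX
    obtain ⟨hBX, hBne, hBneX, hstab⟩ := hg X hX
    rw [Finset.mem_powersetCard] at hX
    obtain ⟨hXS, hXc⟩ := hX
    have hBcard : 1 ≤ (g X).card := Finset.card_pos.mpr hBne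
    have hBlt : (g X).card < X.card :=
      Finset.card_lt_card (Finset.ssubset_iff_subset_ne.mpr ⟨hBX, hBneX⟩)
    have hAcard : (X \ g X).card = d + 1 - (g X).card := by
      rw [Finset.card_sdiff_of_subset hBX, hXc]
    rw [hT, Finset.mem_filter, Finset.mem_product]
    refine ⟨⟨Finset.mem_powerset.mpr ((Finset.sdiff_subset).trans hXS),
      Finset.mem_powerset.mpr (hBX.trans hXS)⟩, ?_, ?_, ?_, hstab⟩
    · rw [Finset.mem_Icc, hAcard]; omega
    · intro x hx
      have hx' : x ∈ g X := hx
      show x ∈ S \ (X \ g X)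
      exact Finset.mem_sdiff.mpr ⟨hXS (hBX hx'), fun h => (Finset.mem_sdiff.mp h).2 hx'⟩
    · show (g X).card = d + 1 - (X \ g X).card
      rw [hAcard]; omega
  have hinj : Set.InjOn (fun X => (X \ g X, g X)) (S.powersetCard (d + 1)) := by
    intro X hX Y hY hXY
    obtain ⟨hBX, _, _, _⟩ := hg X hX
    obtain ⟨hBY, _, _, _⟩ := hg Y hY
    have h1 : X \ g X = Y \ g Y := congrArg Prod.fst hXY
    have h2 : g X = g Y := congrArg Prod.snd hXY
    calc X = (X \ g X) ∪ g X := (Finset.sdiff_union_of_subset hBX).symm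
    _ = (Y \ g Y) ∪ g Y := by rw [h1, h2]
    _ = Y := Finset.sdiff_union_of_subset hBY
  have hcount : n.choose (d + 1) ≤ T.card := by
    rw [← Finset.card_powersetCard (d + 1) S]
    exact Finset.card_le_card_of_injOn _ hpair hinj
  -- Step 3: bound T.card by the double sum
  have hsub : T ⊆ (Finset.Icc 1 d).biUnion (fun i =>
      (S.powersetCard i).biUnion (fun A =>
        (((S \ A).powersetCard (d + 1 - i)).filter (fun B => Stabs E A B)).image
          (fun B => (A, B)))) := by
    intro p hp
    rw [hT, Finset.mem_filter, Finset.mem_product] at hp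
    obtain ⟨⟨hp1, hp2⟩, hi, hBsub, hBcard, hstab⟩ := hp
    rw [Finset.mem_biUnion]
    refine ⟨p.1.card, hi, ?_⟩
    rw [Finset.mem_biUnion]
    refine ⟨p.1, Finset.mem_powersetCard.mpr ⟨Finset.mem_powerset.mp hp1, rfl⟩, ?_⟩
    rw [Finset.mem_image]
    exact ⟨p.2, Finset.mem_filter.mpr ⟨Finset.mem_powersetCard.mpr ⟨hBsub, hBcard⟩, hstab⟩, rfl⟩
  have hTsum : T.card ≤ ∑ i ∈ Finset.Icc 1 d, ∑ A ∈ S.powersetCard i,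
      (((S \ A).powersetCard (d + 1 - i)).filter (fun B => Stabs E A B)).card := by
    refine (Finset.card_le_card hsub).trans ?_
    refine (Finset.card_biUnion_le).trans ?_
    refine Finset.sum_le_sum fun i _ => ?_
    refine (Finset.card_biUnion_le).trans ?_
    exact Finset.sum_le_sum fun A _ => Finset.card_image_le
  -- Step 4: pigeonhole by contradiction
  by_contra hcon
  push_neg at hcon
  set c : ℝ := (n.choose (d + 1) : ℝ) with hc
  have hstrict : ∀ i ∈ Finset.Icc 1 d,
      (∑ A ∈ S.powersetCard i,
        ((((S \ A).powersetCard (d + 1 - i)).filter (fun B => Stabs E A B)).card : ℝ))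
        < c / d := by
    intro i hi
    rw [Finset.mem_Icc] at hi
    have hichoose : 0 < (n.choose i : ℝ) := by
      exact_mod_cast Nat.choose_pos (le_trans (le_trans hi.2 (Nat.le_succ d)) hcard)
    have hne : (S.powersetCard i).Nonempty := by
      rw [← Finset.card_pos, Finset.card_powersetCard]
      exact_mod_cast Nat.choose_pos (le_trans (le_trans hi.2 (Nat.le_succ d)) hcard)
    calc (∑ A ∈ S.powersetCard i,
        ((((S \ A).powersetCard (d + 1 - i)).filter (fun B => Stabs E A B)).card : ℝ))
        < ∑ _A ∈ S.powersetCard i, c / (d * (n.choose i : ℝ)) := by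
          refine Finset.sum_lt_sum_of_nonempty hne fun A hA => ?_
          rw [Finset.mem_powersetCard] at hA
          exact hcon i (Finset.mem_Icc.mpr hi) A hA.1 hA.2
    _ = (n.choose i : ℝ) * (c / (d * (n.choose i : ℝ))) := by
          rw [Finset.sum_const, Finset.card_powersetCard, nsmul_eq_mul]
    _ = c / d := by
          field_simp
  have hd0 : (0 : ℝ) < d := by exact_mod_cast hd
  have hfinal : (T.card : ℝ) < c := by
    calc (T.card : ℝ) ≤ ∑ i ∈ Finset.Icc 1 d, ∑ A ∈ S.powersetCard i,
        ((((S \ A).powersetCard (d + 1 - i)).filter (fun B => Stabs E A B)).card : ℝ) := by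
          exact_mod_cast hTsum
    _ < ∑ _i ∈ Finset.Icc 1 d, c / d := by
          refine Finset.sum_lt_sum_of_nonempty ?_ hstrict
          rw [← Finset.card_pos, Nat.card_Icc]
          omega
    _ = d * (c / d) := by
          rw [Finset.sum_const, Nat.card_Icc, nsmul_eq_mul]
          norm_num
    _ = c := by field_simp
  have : c ≤ (T.card : ℝ) := by rw [hc]; exact_mod_cast hcount
  linarith
end

section
/- For every integer d ≥ 1 there is a constant c_d > 0 such that every finite hypergraph on a nonempty vertex set with VC-dimension at most d admits, for every ε ∈ (0,1), an ε-net of size at most c_d/ε^d. -/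
section

open Finset Fintype

lemma sum_Iic_choose_le_succ_pow (n d : ℕ) : ∑ i ∈ Iic d, n.choose i ≤ (n + 1) ^ d := by
  rw [add_pow, ← Nat.range_succ_eq_Iic]
  refine sum_le_sum fun i hi ↦ ?_
  rw [one_pow, mul_one]
  exact (Nat.choose_le_pow n i).trans
    (Nat.le_mul_of_pos_right _ (Nat.choose_pos (Nat.lt_succ_iff.1 (mem_range.1 hi))))

lemma Nat.choose_mul_two_le_choose_succ {m k : ℕ} (hkm : k ≤ m) (hm : m + 1 ≤ 2 * k) :
    m.choose k * 2 ≤ (m + 1).choose k := by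
  refine Nat.le_of_mul_le_mul_right ?_ (by omega : 0 < m + 1 - k)
  calc m.choose k * 2 * (m + 1 - k) = m.choose k * (2 * (m + 1 - k)) := by ring
    _ ≤ m.choose k * (m + 1) := Nat.mul_le_mul_left _ (by omega)
    _ = (m + 1).choose k * (m + 1 - k) := Nat.choose_mul_succ_eq m k

lemma Nat.choose_sub_mul_two_pow_le {k s : ℕ} (hs : s ≤ k) :
    (2 * k - s).choose k * 2 ^ s ≤ (2 * k).choose k := by
  induction s with
  | zero => simp
  | succ s ih =>
    calc (2 * k - (s + 1)).choose k * 2 ^ (s + 1)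
        = (2 * k - (s + 1)).choose k * 2 * 2 ^ s := by ring
      _ ≤ (2 * k - s).choose k * 2 ^ s := by
        have h := Nat.choose_mul_two_le_choose_succ (m := 2 * k - (s + 1)) (k := k)
          (by omega) (by omega)
        rw [show 2 * k - (s + 1) + 1 = 2 * k - s by omega] at h
        exact Nat.mul_le_mul_right _ h
      _ ≤ (2 * k).choose k := ih (by omega)

lemma two_mul_mul_pow_lt_two_pow {d t : ℕ} (hd : 1 ≤ d) (ht : 1 ≤ t) :
    2 * t * (2 * (20 * d ^ 2 * t ^ 2) + 1) ^ d < 2 ^ (10 * d ^ 2 * t) := by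
  have hdt : 1 ≤ d * t := Nat.one_le_iff_ne_zero.2 (by positivity)
  have hbase : 2 * (20 * d ^ 2 * t ^ 2) + 1 ≤ 2 ^ (8 * (d * t)) :=
    calc 2 * (20 * d ^ 2 * t ^ 2) + 1 ≤ 2 ^ 6 * (d * t) ^ 2 := by nlinarith
      _ ≤ 2 ^ 6 * (2 ^ (d * t)) ^ 2 := by gcongr; exact Nat.lt_two_pow_self.le
      _ = 2 ^ (6 + 2 * (d * t)) := by ring
      _ ≤ 2 ^ (8 * (d * t)) := Nat.pow_le_pow_right (by norm_num) (by omega)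
  have hfactor : 2 * t < 2 ^ (2 * d ^ 2 * t) :=
    calc 2 * t < 2 * 2 ^ t := by have := @Nat.lt_two_pow_self t; omega
      _ = 2 ^ (t + 1) := by ring
      _ ≤ 2 ^ (2 * d ^ 2 * t) := Nat.pow_le_pow_right (by norm_num) (by nlinarith)
  calc 2 * t * (2 * (20 * d ^ 2 * t ^ 2) + 1) ^ d
      < 2 ^ (2 * d ^ 2 * t) * (2 ^ (8 * (d * t))) ^ d :=
        Nat.mul_lt_mul_of_lt_of_le hfactor (Nat.pow_le_pow_left hbase d) (by positivity)
    _ = 2 ^ (10 * d ^ 2 * t) := by rw [← pow_mul, ← pow_add]; ring_nf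

variable {α : Type*} [DecidableEq α] {𝒜 : Finset (Finset α)}

section VCDimOne

lemma shatters_pair {a b : α} (hab : ∃ u ∈ 𝒜, a ∈ u ∧ b ∈ u) (ha : ∃ u ∈ 𝒜, a ∈ u ∧ b ∉ u)
    (hb : ∃ u ∈ 𝒜, a ∉ u ∧ b ∈ u) (h : ∃ u ∈ 𝒜, a ∉ u ∧ b ∉ u) : 𝒜.Shatters {a, b} := by
  intro t ht
  obtain ⟨u, hu, hua, hub⟩ : ∃ u ∈ 𝒜, (a ∈ u ↔ a ∈ t) ∧ (b ∈ u ↔ b ∈ t) := by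
    by_cases a ∈ t <;> by_cases b ∈ t <;> grind
  refine ⟨u, hu, ?_⟩
  ext x
  have := @ht x
  simp only [mem_inter, mem_insert, mem_singleton] at this ⊢
  grind

lemma exists_hitting_pair_or_exists_mem_of_not_disjoint (h𝒜 : 𝒜.vcDim ≤ 1) {M : Finset α}
    (hM : M ∈ 𝒜) (hMne : M.Nonempty) :
    (∃ a b : α, ∀ u ∈ 𝒜, a ∈ u ∨ b ∈ u) ∨ ∃ a, ∀ u ∈ 𝒜, ¬Disjoint u M → a ∈ u := by
  obtain ⟨a, haM, hmax⟩ := M.exists_max_image (fun x ↦ #{u ∈ 𝒜 | x ∈ u}) hMne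
  by_cases hcore : ∀ u ∈ 𝒜, ¬Disjoint u M → a ∈ u
  · exact .inr ⟨a, hcore⟩
  push Not at hcore
  obtain ⟨u₀, hu₀, hu₀M, hau₀⟩ := hcore
  obtain ⟨b, hbu₀, hbM⟩ := not_disjoint_iff.1 hu₀M
  obtain ⟨w, hw, haw, hbw⟩ : ∃ w ∈ 𝒜, a ∈ w ∧ b ∉ w := by
    by_contra! h
    have hsub : {u ∈ 𝒜 | a ∈ u} ⊆ {u ∈ 𝒜 | b ∈ u} := fun u hu ↦ by
      simp only [mem_filter] at hu ⊢
      exact ⟨hu.1, h u hu.1 hu.2⟩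
    have hlt : {u ∈ 𝒜 | a ∈ u} ⊂ {u ∈ 𝒜 | b ∈ u} :=
      (ssubset_iff_of_subset hsub).2 ⟨u₀, by simp [hu₀, hbu₀], by simp [hau₀]⟩
    exact (card_lt_card hlt).not_ge (hmax b hbM)
  left
  refine ⟨a, b, fun u hu ↦ ?_⟩
  by_contra! hab
  have hne : a ≠ b := by rintro rfl; exact hau₀ hbu₀
  have := (shatters_pair ⟨M, hM, haM, hbM⟩ ⟨w, hw, haw, hbw⟩ ⟨u₀, hu₀, hau₀, hbu₀⟩
    ⟨u, hu, hab⟩).card_le_vcDim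
  rw [card_pair hne] at this
  omega

theorem exists_hitting_card_mul_le_of_vcDim_le_one (h𝒜 : 𝒜.vcDim ≤ 1) {U : Finset α}
    (hU : ∀ u ∈ 𝒜, u ⊆ U) {m : ℕ} (hm : 0 < m) (hsize : ∀ u ∈ 𝒜, m ≤ #u) :
    ∃ N : Finset α, (∀ u ∈ 𝒜, (N ∩ u).Nonempty) ∧ m * #N ≤ 2 * m + #U := by
  induction 𝒜 using Finset.strongInduction generalizing U with
  | H 𝒜 ih =>
  obtain rfl | ⟨M, hM⟩ := 𝒜.eq_empty_or_nonempty
  · exact ⟨∅, by simp, by simp⟩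
  have hMne : M.Nonempty := card_pos.1 (hm.trans_le (hsize M hM))
  obtain ⟨a, b, hab⟩ | ⟨a, ha⟩ :=
    exists_hitting_pair_or_exists_mem_of_not_disjoint h𝒜 hM hMne
  · refine ⟨{a, b}, fun u hu ↦ ?_, ?_⟩
    · obtain h | h := hab u hu
      · exact ⟨a, by simp [h]⟩
      · exact ⟨b, by simp [h]⟩
    · have := card_le_two (a := a) (b := b)
      nlinarith
  · obtain ⟨N, hN, hNcard⟩ := ih {u ∈ 𝒜 | Disjoint u M}
      (filter_ssubset.2 ⟨M, hM, by simpa using hMne.ne_empty⟩)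
      ((vcDim_mono (filter_subset _ _)).trans h𝒜) (U := U \ M)
      (fun u hu ↦ subset_sdiff.2 ⟨hU u (mem_filter.1 hu).1, (mem_filter.1 hu).2⟩)
      (fun u hu ↦ hsize u (mem_filter.1 hu).1)
    refine ⟨insert a N, fun u hu ↦ ?_, ?_⟩
    · by_cases huM : Disjoint u M
      · exact (hN u (mem_filter.2 ⟨hu, huM⟩)).mono (inter_subset_inter_right (subset_insert _ _))
      · exact ⟨a, mem_inter.2 ⟨mem_insert_self _ _, ha u hu huM⟩⟩
    · have h1 := Nat.mul_le_mul_left m (card_insert_le a N)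
      rw [mul_add_one] at h1
      rw [card_sdiff_of_subset (hU M hM)] at hNcard
      have := card_le_card (hU M hM)
      have := hsize M hM
      omega

theorem exists_hitting_card_le_of_vcDim_le_one [Fintype α] [Nonempty α] (h𝒜 : 𝒜.vcDim ≤ 1)
    {ε : ℝ} (hε : 0 < ε) (hsize : ∀ u ∈ 𝒜, ε * card α ≤ #u) :
    ∃ N : Finset α, (∀ u ∈ 𝒜, (N ∩ u).Nonempty) ∧ (#N : ℝ) ≤ 2 + 1 / ε := by
  have hn : (0 : ℝ) < card α := by exact_mod_cast Fintype.card_pos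
  have hm : ε * card α ≤ ⌈ε * card α⌉₊ := Nat.le_ceil _
  obtain ⟨N, hN, hNm⟩ := exists_hitting_card_mul_le_of_vcDim_le_one h𝒜 (U := univ)
    (fun u _ ↦ subset_univ u) (Nat.ceil_pos.2 (by positivity))
    (fun u hu ↦ Nat.ceil_le.2 (hsize u hu))
  refine ⟨N, hN, ?_⟩
  rw [card_univ] at hNm
  have hNm' : (⌈ε * card α⌉₊ : ℝ) * #N ≤ 2 * ⌈ε * card α⌉₊ + card α := by exact_mod_cast hNm
  rw [← sub_le_iff_le_add', le_div_iff₀ hε]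
  nlinarith

end VCDimOne

section Traces

variable {ι : Type*} [Fintype ι] [DecidableEq ι] {z : ι → α} {A : Finset ι}

def sampleTrace (z : ι → α) (𝒜 : Finset (Finset α)) : Finset (Finset ι) :=
  𝒜.image fun u ↦ ({i | z i ∈ u} : Finset ι)

lemma Finset.Shatters.injOn_of_sampleTrace (h : (sampleTrace z 𝒜).Shatters A) :
    Set.InjOn z A := by
  intro i hi j hj hij
  obtain ⟨t, ht, hAt⟩ := h.exists_inter_eq_singleton hi
  obtain ⟨u, -, rfl⟩ := mem_image.1 ht
  have hiu : z i ∈ u := by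
    have := hAt ▸ mem_singleton_self i
    simp only [mem_inter, mem_filter] at this
    exact this.2.2
  have hj' : j ∈ A ∩ ({i | z i ∈ u} : Finset ι) := mem_inter.2 ⟨hj, by simp [← hij, hiu]⟩
  rw [hAt] at hj'
  exact (mem_singleton.1 hj').symm

lemma Finset.Shatters.image_of_sampleTrace (h : (sampleTrace z 𝒜).Shatters A) :
    𝒜.Shatters (A.image z) := by
  intro B hB
  obtain ⟨t, ht, hAt⟩ := h (filter_subset (fun i ↦ z i ∈ B) A)
  obtain ⟨u, hu, rfl⟩ := mem_image.1 ht
  refine ⟨u, hu, ?_⟩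
  have key : ∀ i ∈ A, z i ∈ u ↔ z i ∈ B := fun i hi ↦ by
    simpa [hi] using congrArg (i ∈ ·) hAt
  ext v
  simp only [mem_inter, mem_image]
  constructor
  · rintro ⟨⟨i, hi, rfl⟩, hv⟩
    exact (key i hi).1 hv
  · intro hv
    obtain ⟨i, hi, rfl⟩ := mem_image.1 (hB hv)
    exact ⟨⟨i, hi, rfl⟩, (key i hi).2 hv⟩

lemma vcDim_sampleTrace_le : (sampleTrace z 𝒜).vcDim ≤ 𝒜.vcDim :=
  Finset.sup_le fun A hA ↦ by
    have h := mem_shatterer.1 hA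
    rw [← card_image_of_injOn h.injOn_of_sampleTrace]
    exact h.image_of_sampleTrace.card_le_vcDim

lemma card_sampleTrace_le {d : ℕ} (h𝒜 : 𝒜.vcDim ≤ d) :
    #(sampleTrace z 𝒜) ≤ (card ι + 1) ^ d :=
  calc #(sampleTrace z 𝒜) ≤ #(sampleTrace z 𝒜).shatterer := card_le_card_shatterer _
    _ ≤ ∑ i ∈ Iic (sampleTrace z 𝒜).vcDim, (card ι).choose i := card_shatterer_le_sum_vcDim
    _ ≤ ∑ i ∈ Iic d, (card ι).choose i :=
      sum_le_sum_of_subset (Iic_subset_Iic.2 (vcDim_sampleTrace_le.trans h𝒜))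
    _ ≤ (card ι + 1) ^ d := sum_Iic_choose_le_succ_pow _ _

def IsBadSplit (𝒜 : Finset (Finset α)) (s : ℕ) (S : Finset ι) (z : ι → α) : Prop :=
  ∃ u ∈ 𝒜, (∀ i ∈ S, z i ∉ u) ∧ s ≤ #{i | z i ∈ u}

instance (𝒜 : Finset (Finset α)) (s : ℕ) (S : Finset ι) : DecidablePred (IsBadSplit 𝒜 s S) :=
  fun _ ↦ inferInstanceAs (Decidable (∃ u ∈ 𝒜, _))

lemma card_isBadSplit_mul_two_pow_le {k s d : ℕ} (hι : card ι = 2 * k) (hsk : s ≤ k)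
    (h𝒜 : 𝒜.vcDim ≤ d) (z : ι → α) :
    #{S ∈ powersetCard k univ | IsBadSplit 𝒜 s S z} * 2 ^ s
      ≤ (2 * k + 1) ^ d * (2 * k).choose k := by
  set G := {Q ∈ sampleTrace z 𝒜 | s ≤ #Q}
  have hsub : {S ∈ powersetCard k (univ : Finset ι) | IsBadSplit 𝒜 s S z}
      ⊆ G.biUnion fun Q ↦ powersetCard k Qᶜ := by
    intro S hS
    obtain ⟨hSk, u, hu, hSu, hsu⟩ := mem_filter.1 hS
    refine mem_biUnion.2 ⟨({i | z i ∈ u} : Finset ι), mem_filter.2 ⟨mem_image_of_mem _ hu, hsu⟩, ?_⟩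
    exact mem_powersetCard.2 ⟨fun i hi ↦ by simpa using hSu i hi, (mem_powersetCard.1 hSk).2⟩
  have hG : ∀ Q ∈ G, #(powersetCard k Qᶜ) * 2 ^ s ≤ (2 * k).choose k := fun Q hQ ↦ by
    have := (mem_filter.1 hQ).2
    rw [card_powersetCard, card_compl, hι]
    exact (Nat.mul_le_mul_right _ (Nat.choose_le_choose k (by omega))).trans
      (Nat.choose_sub_mul_two_pow_le hsk)
  calc #{S ∈ powersetCard k univ | IsBadSplit 𝒜 s S z} * 2 ^ s
      ≤ (∑ Q ∈ G, #(powersetCard k Qᶜ)) * 2 ^ s :=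
        Nat.mul_le_mul_right _ ((card_le_card hsub).trans card_biUnion_le)
    _ ≤ #G * (2 * k).choose k := by
        rw [sum_mul]
        exact sum_le_card_nsmul _ _ _ hG
    _ ≤ (2 * k + 1) ^ d * (2 * k).choose k := by
        gcongr
        exact (card_filter_le _ _).trans (hι ▸ card_sampleTrace_le h𝒜)

end Traces

section Sampling

variable [Fintype α] {ι κ : Type*} [Fintype ι] [DecidableEq ι] [Fintype κ] [DecidableEq κ]

lemma card_filter_apply_mem (j : κ) (u : Finset α) :
    #{y : κ → α | y j ∈ u} = #u * card α ^ (card κ - 1) := by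
  have : ({y : κ → α | y j ∈ u} : Finset _) = piFinset (Function.update (fun _ ↦ univ) j u) := by
    ext y
    simp only [mem_filter, mem_univ, true_and, mem_piFinset]
    refine ⟨fun h i ↦ ?_, fun h ↦ by simpa using h j⟩
    by_cases hi : i = j
    · subst hi
      simpa
    · simp [hi]
  rw [this, card_piFinset, prod_eq_mul_prod_sdiff_singleton_of_mem (mem_univ j),
    Function.update_self,
    Finset.prod_congr rfl fun i hi ↦ by rw [Function.update_of_ne (by simpa using hi)], prod_const]
  simp [card_sdiff]

lemma sum_card_filter_apply_mem (u : Finset α) :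
    ∑ y : κ → α, #{j | y j ∈ u} = card κ * (#u * card α ^ (card κ - 1)) := by
  simp_rw [card_filter]
  rw [sum_comm]
  simp_rw [← card_filter, card_filter_apply_mem, sum_const, card_univ, smul_eq_mul]

lemma le_card_filter_le_card_filter_apply_mem (hκ : 0 < card κ) {u : Finset α} {ε : ℝ}
    (hu : ε * card α ≤ #u) {s : ℕ} (hs : s ≤ ε * card κ / 2) :
    ε / 2 * card α ^ card κ ≤ #{y : κ → α | s ≤ #{j | y j ∈ u}} := by
  set good : Finset (κ → α) := {y | s ≤ #{j | y j ∈ u}}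
  have hsum : ∑ y : κ → α, #{j | y j ∈ u} ≤ #good * card κ + card α ^ card κ * s := by
    rw [← sum_filter_add_sum_filter_not univ fun y ↦ s ≤ #{j | y j ∈ u}]
    gcongr
    · exact sum_le_card_nsmul _ _ _ fun y _ ↦ card_le_univ _
    · refine (sum_le_card_nsmul _ _ s fun y hy ↦ (not_le.1 (mem_filter.1 hy).2).le).trans ?_
      rw [smul_eq_mul, ← card_fun]
      exact Nat.mul_le_mul_right _ (card_le_univ _)
  rw [sum_card_filter_apply_mem] at hsum
  have hpow : (card α : ℝ) ^ card κ = card α * card α ^ (card κ - 1) := by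
    rw [← pow_succ', Nat.sub_add_cancel hκ]
  have hsumR : (card κ : ℝ) * (#u * card α ^ (card κ - 1))
      ≤ #good * card κ + card α ^ card κ * s := by exact_mod_cast hsum
  have hk : (0 : ℝ) < card κ := by exact_mod_cast hκ
  refine le_of_mul_le_mul_left ?_ hk
  have h1 := mul_le_mul_of_nonneg_right hu
    (by positivity : (0 : ℝ) ≤ card κ * card α ^ (card κ - 1))
  have h2 := mul_le_mul_of_nonneg_left hs (by positivity : (0 : ℝ) ≤ card α ^ card κ)
  rw [hpow] at h2 ⊢
  nlinarith

lemma le_card_isBadSplit {ε : ℝ} {s : ℕ} {S : Finset ι}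
    (hno : ∀ N : Finset α, #N ≤ #S → ∃ u ∈ 𝒜, Disjoint N u)
    (hsize : ∀ u ∈ 𝒜, ε * card α ≤ #u) (hSc : 0 < #Sᶜ) (hs : s ≤ ε * #Sᶜ / 2) :
    ε / 2 * card α ^ card ι ≤ #{z | IsBadSplit 𝒜 s S z} := by
  have hwit : ∀ x : S → α, ∃ u ∈ 𝒜, ∀ i, x i ∉ u := fun x ↦ by
    obtain ⟨u, hu, hxu⟩ := hno (univ.image x) (card_image_le.trans (by simp))
    exact ⟨u, hu, fun i ↦ disjoint_left.1 hxu (mem_image_of_mem x (mem_univ i))⟩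
  choose w hw hwx using hwit
  have hcardSc : card {i // i ∉ S} = #Sᶜ := by simp [card_subtype_compl, card_compl]
  let Φ := Equiv.piEquivPiSubtypeProd (· ∈ S) fun _ : ι ↦ α
  have hΦ : #{p : (S → α) × ({i // i ∉ S} → α) | s ≤ #{j | p.2 j ∈ w p.1}}
      ≤ #{z | IsBadSplit 𝒜 s S z} := by
    refine card_le_card_of_injOn Φ.symm (fun p hp ↦ ?_) Φ.symm.injective.injOn
    simp only [coe_filter, mem_univ, true_and, Set.mem_ofPred_eq] at hp ⊢
    refine ⟨w p.1, hw p.1, fun i hi ↦ by simpa [Φ, hi] using hwx p.1 ⟨i, hi⟩, hp.trans ?_⟩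
    refine card_le_card_of_injOn Subtype.val (fun j hj ↦ ?_) Subtype.val_injective.injOn
    simp only [coe_filter, mem_univ, true_and, Set.mem_ofPred_eq] at hj ⊢
    simpa [Φ, j.2] using hj
  have hsum : #{p : (S → α) × ({i // i ∉ S} → α) | s ≤ #{j | p.2 j ∈ w p.1}}
      = ∑ x : S → α, #{y : {i // i ∉ S} → α | s ≤ #{j | y j ∈ w x}} := by
    simp_rw [card_filter]
    exact Fintype.sum_prod_type _
  have hmarkov x : ε / 2 * card α ^ #Sᶜ ≤ #{y : {i // i ∉ S} → α | s ≤ #{j | y j ∈ w x}} := by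
    rw [← hcardSc] at hs hSc ⊢
    exact le_card_filter_le_card_filter_apply_mem hSc (hsize _ (hw x)) hs
  calc ε / 2 * card α ^ card ι = ∑ _x : S → α, ε / 2 * card α ^ #Sᶜ := by
        rw [sum_const, card_univ, card_fun, card_coe, nsmul_eq_mul, card_compl]
        push_cast
        rw [mul_left_comm, ← pow_add, Nat.add_sub_cancel' (card_le_univ S)]
    _ ≤ ∑ x : S → α, (#{y : {i // i ∉ S} → α | s ≤ #{j | y j ∈ w x}} : ℝ) :=
        sum_le_sum fun x _ ↦ hmarkov x
    _ ≤ #{z | IsBadSplit 𝒜 s S z} := by exact_mod_cast hsum ▸ hΦ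

theorem exists_hitting_card_le_of_two_mul_succ_pow_lt [Nonempty α] {d k s : ℕ} {ε : ℝ}
    (h𝒜 : 𝒜.vcDim ≤ d) (hsize : ∀ u ∈ 𝒜, ε * card α ≤ #u) (hk : 0 < k) (hsk : s ≤ k)
    (hs : s ≤ ε * k / 2) (hlarge : 2 * (2 * k + 1) ^ d < ε * 2 ^ s) :
    ∃ N : Finset α, #N ≤ k ∧ ∀ u ∈ 𝒜, (N ∩ u).Nonempty := by
  by_contra! hno
  replace hno (N : Finset α) (hN : #N ≤ k) : ∃ u ∈ 𝒜, Disjoint N u := by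
    obtain ⟨u, hu, h⟩ := hno N hN
    exact ⟨u, hu, disjoint_iff_inter_eq_empty.2 h⟩
  have hlow : ∀ S ∈ powersetCard k (univ : Finset (Fin (2 * k))),
      ε / 2 * card α ^ (2 * k) ≤ #{z : Fin (2 * k) → α | IsBadSplit 𝒜 s S z} := fun S hS ↦ by
    have hS := (mem_powersetCard.1 hS).2
    have hSc : #Sᶜ = k := by rw [card_compl, hS, Fintype.card_fin]; omega
    rw [← hS] at hno
    rw [← hSc] at hk hs
    simpa using le_card_isBadSplit hno hsize hk hs
  have hup (z : Fin (2 * k) → α) :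
      #{S ∈ powersetCard k univ | IsBadSplit 𝒜 s S z} * 2 ^ s
        ≤ (2 * k + 1) ^ d * (2 * k).choose k :=
    card_isBadSplit_mul_two_pow_le (Fintype.card_fin _) hsk h𝒜 z
  have hcount : ∑ S ∈ powersetCard k univ, #{z : Fin (2 * k) → α | IsBadSplit 𝒜 s S z}
      = ∑ z : Fin (2 * k) → α, #{S ∈ powersetCard k univ | IsBadSplit 𝒜 s S z} := by
    simp_rw [card_filter]
    exact sum_comm
  have hC : (0 : ℝ) < (2 * k).choose k := by exact_mod_cast Nat.choose_pos (by omega)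
  have hP : (0 : ℝ) < card α ^ (2 * k) := by have := Fintype.card_pos (α := α); positivity
  have hlowR : (2 * k).choose k * (ε / 2 * card α ^ (2 * k))
      ≤ ∑ S ∈ powersetCard k univ, (#{z : Fin (2 * k) → α | IsBadSplit 𝒜 s S z} : ℝ) := by
    have := card_nsmul_le_sum _ _ _ hlow
    rwa [card_powersetCard, card_univ, Fintype.card_fin, nsmul_eq_mul] at this
  have hupR : (∑ z : Fin (2 * k) → α, (#{S ∈ powersetCard k univ | IsBadSplit 𝒜 s S z} : ℝ))
      * 2 ^ s ≤ card α ^ (2 * k) * ((2 * k + 1) ^ d * (2 * k).choose k) := by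
    have := sum_le_card_nsmul univ _ _ fun z _ ↦ hup z
    rw [← sum_mul, card_univ, card_fun, Fintype.card_fin, smul_eq_mul] at this
    exact_mod_cast this
  have hcountR := congrArg (Nat.cast (R := ℝ)) hcount
  push_cast at hcountR
  rw [← hcountR] at hupR
  nlinarith [mul_lt_mul_of_pos_right hlarge (mul_pos hC hP),
    mul_le_mul_of_nonneg_right hlowR (by positivity : (0 : ℝ) ≤ 2 ^ s)]

theorem exists_hitting_card_le_of_vcDim_le [Nonempty α] {d : ℕ} (hd : 1 ≤ d) (h𝒜 : 𝒜.vcDim ≤ d)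
    {ε : ℝ} (hε0 : 0 < ε) (hε1 : ε ≤ 1) (hsize : ∀ u ∈ 𝒜, ε * card α ≤ #u) :
    ∃ N : Finset α, (∀ u ∈ 𝒜, (N ∩ u).Nonempty) ∧ (#N : ℝ) ≤ 80 * d ^ 2 / ε ^ 2 := by
  set t := ⌈1 / ε⌉₊
  have ht1 : 1 ≤ t := Nat.one_le_ceil_iff.2 (by positivity)
  have hεt : 1 ≤ ε * t := by
    have := Nat.le_ceil (1 / ε)
    rwa [div_le_iff₀ hε0, mul_comm] at this
  have ht2 : (t : ℝ) ≤ 2 / ε := by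
    have := Nat.ceil_lt_add_one (by positivity : 0 ≤ 1 / ε)
    have : 1 ≤ 1 / ε := by rwa [le_div_iff₀ hε0, one_mul]
    linarith [show 2 / ε = 1 / ε + 1 / ε by ring]
  have hlarge := two_mul_mul_pow_lt_two_pow hd ht1
  have hlargeR : (2 * t * (2 * (20 * d ^ 2 * t ^ 2) + 1) ^ d : ℝ) < 2 ^ (10 * d ^ 2 * t) := by
    exact_mod_cast hlarge
  -- `k = 2ts` gives `s ≤ εk/2` as `εt ≥ 1`, and `s = 10d²t` beats the Sauer–Shelah count.
  obtain ⟨N, hN, hhit⟩ := exists_hitting_card_le_of_two_mul_succ_pow_lt (k := 20 * d ^ 2 * t ^ 2)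
    (s := 10 * d ^ 2 * t) h𝒜 hsize (by positivity)
    (by nlinarith [Nat.mul_le_mul_left (10 * d ^ 2 * t) ht1])
    (by push_cast; nlinarith [mul_le_mul_of_nonneg_left hεt (by positivity : (0 : ℝ) ≤ d ^ 2 * t)])
    (by push_cast; nlinarith [pow_pos (two_pos (α := ℝ)) (10 * d ^ 2 * t)])
  refine ⟨N, hhit, ?_⟩
  calc (#N : ℝ) ≤ 20 * d ^ 2 * t ^ 2 := by exact_mod_cast hN
    _ ≤ 20 * d ^ 2 * (2 / ε) ^ 2 := by gcongr
    _ = 80 * d ^ 2 / ε ^ 2 := by ring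

end Sampling

end

theorem explicit_eps_net_bound (d : ℕ) (hd : 1 ≤ d) :
    ∃ c : ℝ, 0 < c ∧
      ∀ (V : Type) (_ : Fintype V) (_ : DecidableEq V) (_ : Nonempty V)
        (E : Finset (Finset V)),
        (∀ A : Finset V, Shatters E A → A.card ≤ d) →
        ∀ ε : ℝ, ε ∈ Set.Ioo (0 : ℝ) 1 →
          ∃ N : Finset V,
            (∀ e ∈ E, ε * (Fintype.card V : ℝ) ≤ (e.card : ℝ) → (N ∩ e).Nonempty) ∧
            (N.card : ℝ) ≤ c / ε ^ d := by
  refine ⟨80 * d ^ 2, by positivity, fun V _ _ _ E hE ε ⟨hε0, hε1⟩ ↦ ?_⟩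
  set L := E.filter fun e ↦ ε * Fintype.card V ≤ e.card
  have hL : L.vcDim ≤ d := (Finset.vcDim_mono (Finset.filter_subset _ _)).trans
    (Finset.sup_le fun A hA ↦ hE A (Finset.mem_shatterer.1 hA))
  have hsize : ∀ e ∈ L, ε * Fintype.card V ≤ e.card := fun e he ↦ (Finset.mem_filter.1 he).2
  suffices ∃ N : Finset V, (∀ e ∈ L, (N ∩ e).Nonempty) ∧ (N.card : ℝ) ≤ 80 * d ^ 2 / ε ^ d by
    obtain ⟨N, hN, hcard⟩ := this
    exact ⟨N, fun e he hbig ↦ hN e (Finset.mem_filter.2 ⟨he, hbig⟩), hcard⟩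
  obtain rfl | hd2 := hd.eq_or_lt
  · obtain ⟨N, hN, hcard⟩ := exists_hitting_card_le_of_vcDim_le_one hL hε0 hsize
    refine ⟨N, hN, hcard.trans ?_⟩
    rw [Nat.cast_one, one_pow, pow_one, le_div_iff₀ hε0, add_mul, one_div_mul_cancel hε0.ne']
    linarith
  · obtain ⟨N, hN, hcard⟩ := exists_hitting_card_le_of_vcDim_le hd hL hε0 hε1.le hsize
    exact ⟨N, hN, hcard.trans (div_le_div_of_nonneg_left (by positivity) (by positivity)
      (pow_le_pow_of_le_one hε0.le hε1.le hd2))⟩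
end

section
/- Let H = (V,E) be a finite hypergraph with 2-VC-dimension d ≥ 2 and let S ∈ E be a hyperedge with |S| ≥ d+1. Assume that for every (d+1)-element subset X of S, the empty set is 2-realized by H with respect to X. Then there exist an integer i ∈ {2,…,d} and an i-element subset A ⊆ S such that A 2-stabs at least C(|S|,d+1)/((d−1)·C(|S|,i)) subsets B ⊆ S∖A of cardinality d+1−i. -/
/-- `T'` is `t`-realized by the hyperedge family `E` with respect to `T`:
`T' ∪ W ∈ Π_H(T)` for some `W ⊆ T` with `|W| < t`. -/
def TRealized {V : Type*} [DecidableEq V] (E : Finset (Finset V)) (t : ℕ)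
    (T T' : Finset V) : Prop :=
  ∃ W ⊆ T, W.card < t ∧ ∃ e ∈ E, T ∩ e = T' ∪ W

/-- `T` is `t`-shattered by the hyperedge family `E`. -/
def TShattered {V : Type*} [DecidableEq V] (E : Finset (Finset V)) (t : ℕ)
    (T : Finset V) : Prop :=
  ∀ T' ⊆ T, TRealized E t T T'

/-- The hypergraph with hyperedge family `E` has `t`-VC-dimension exactly `d`. -/
def IsTVCDim {V : Type*} [DecidableEq V] (E : Finset (Finset V)) (t d : ℕ) : Prop :=
  (∃ T : Finset V, TShattered E t T ∧ T.card = d) ∧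
  ∀ T : Finset V, TShattered E t T → T.card ≤ d

/-- `A` `t`-stabs `B`: every hyperedge containing `B` contains at least `t` vertices of `A`. -/
def TStabs {V : Type*} [DecidableEq V] (E : Finset (Finset V)) (t : ℕ)
    (A B : Finset V) : Prop :=
  ∀ e ∈ E, B ⊆ e → t ≤ (e ∩ A).card

instance {V : Type*} [DecidableEq V] (E : Finset (Finset V)) (t : ℕ) (A B : Finset V) :
    Decidable (TStabs E t A B) :=
  inferInstanceAs (Decidable (∀ e ∈ E, B ⊆ e → t ≤ (e ∩ A).card))

/-!
An `X ⊆ S` with `d + 1` elements is not 2-shattered. Take `T' ⊆ X` that is not 2-realized and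
put `A = X \ T'`. Since `X = X ∩ S` realizes `T' ∪ A`, we get `|A| ≥ 2`; since `∅` is 2-realized,
`T' ≠ ∅`, so `|A| ≤ d`; and any hyperedge `e ⊇ T'` meeting `A` in fewer than two vertices would
realize `T'` with `W = e ∩ A`, so `A` 2-stabs `T'`. Every `(d + 1)`-subset of `S` thus splits as
`A ∪ B` with `A` stabbing `B`; averaging the `C(|S|, d + 1)` splittings over the `d - 1` possible
sizes of `A` and then over the `C(|S|, i)` sets `A` of size `i` gives the bound.
-/

open Finset

theorem Finset.exists_div_card_le_of_le_sum {ι K : Type*} [Field K] [LinearOrder K]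
    [IsStrictOrderedRing K] {s : Finset ι} {g : ι → K} {c : K} (hs : s.Nonempty)
    (h : c ≤ ∑ i ∈ s, g i) : ∃ i ∈ s, c / #s ≤ g i :=
  exists_le_of_sum_le hs <| by
    rwa [sum_const, nsmul_eq_mul, mul_div_cancel₀ _ (by positivity)]

section Hypergraph

variable {V : Type*} [DecidableEq V] {E : Finset (Finset V)} {t : ℕ} {X T' e : Finset V}

theorem tRealized_of_card_sdiff_lt (he : e ∈ E) (hXe : X ⊆ e) (hT' : T' ⊆ X)
    (hcard : #(X \ T') < t) : TRealized E t X T' :=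
  ⟨X \ T', sdiff_subset, hcard, e, he, by rw [inter_eq_left.mpr hXe, union_sdiff_of_subset hT']⟩

theorem tStabs_sdiff_of_not_tRealized (hT' : T' ⊆ X) (h : ¬ TRealized E t X T') :
    TStabs E t (X \ T') T' := by
  intro e he hT'e
  by_contra! hlt
  refine h ⟨e ∩ (X \ T'), inter_subset_right.trans sdiff_subset, hlt, e, he, ?_⟩
  ext x
  simp only [mem_inter, mem_union, mem_sdiff]
  grind

theorem exists_tStabs_sdiff_of_not_tShattered (he : e ∈ E) (hXe : X ⊆ e)
    (hempty : TRealized E t X ∅) (hns : ¬ TShattered E t X) :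
    ∃ A ⊆ X, t ≤ #A ∧ #A < #X ∧ TStabs E t A (X \ A) := by
  obtain ⟨T', hT'X, hT'⟩ : ∃ T' ⊆ X, ¬ TRealized E t X T' := by
    simpa [TShattered] using hns
  have hT'ne : T'.Nonempty := by
    rw [nonempty_iff_ne_empty]
    rintro rfl
    exact hT' hempty
  refine ⟨X \ T', sdiff_subset, ?_, card_lt_card (sdiff_ssubset hT'X hT'ne), ?_⟩
  · by_contra! hlt
    exact hT' (tRealized_of_card_sdiff_lt he hXe hT'X hlt)
  · rw [Finset.sdiff_sdiff_eq_self hT'X]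
    exact tStabs_sdiff_of_not_tRealized hT'X hT'

end Hypergraph

section Counting

variable {V : Type*} [DecidableEq V] {S : Finset V} {I : Finset ℕ} {m : ℕ}
  {P : Finset V → Finset V → Prop} [DecidableRel P]

theorem choose_le_sum_card_filter_powersetCard
    (hcover : ∀ X ∈ S.powersetCard m, ∃ A ⊆ X, #A ∈ I ∧ P A (X \ A)) :
    (#S).choose m ≤
      ∑ i ∈ I, ∑ A ∈ S.powersetCard i, #{B ∈ (S \ A).powersetCard (m - i) | P A B} := by
  let splittings := I.sigma fun i ↦ (S.powersetCard i).sigma fun A ↦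
    {B ∈ (S \ A).powersetCard (m - i) | P A B}
  calc (#S).choose m = #(S.powersetCard m) := (card_powersetCard m S).symm
    _ ≤ #splittings := by
      refine card_le_card_of_surjOn (fun p ↦ p.2.1 ∪ p.2.2) fun X hX ↦ ?_
      obtain ⟨hXS, hXcard⟩ := mem_powersetCard.mp hX
      obtain ⟨A, hAX, hAI, hPA⟩ := hcover X hX
      refine ⟨⟨#A, A, X \ A⟩, ?_, union_sdiff_of_subset hAX⟩
      simp only [splittings, coe_sigma, Set.mem_sigma_iff, mem_coe, mem_powersetCard,
        mem_filter, and_true]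
      exact ⟨hAI, hAX.trans hXS, ⟨sdiff_subset_sdiff hXS le_rfl,
        by rw [card_sdiff_of_subset hAX, hXcard]⟩, hPA⟩
    _ = _ := by simp only [splittings, card_sigma]

theorem exists_le_card_filter_powersetCard (hm : m ≤ #S)
    (hcover : ∀ X ∈ S.powersetCard m, ∃ A ⊆ X, #A ∈ I ∧ P A (X \ A)) :
    ∃ i ∈ I, ∃ A ⊆ S, #A = i ∧
      ((#S).choose m : ℝ) / (#I * (#S).choose i) ≤
        #{B ∈ (S \ A).powersetCard (m - i) | P A B} := by
  have hI : I.Nonempty := by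
    obtain ⟨X, hX⟩ := powersetCard_nonempty.mpr hm
    obtain ⟨A, -, hAI, -⟩ := hcover X hX
    exact ⟨#A, hAI⟩
  have hpos : (0 : ℝ) < ((#S).choose m : ℝ) / #I := by
    have := Nat.choose_pos hm
    have := hI.card_pos
    positivity
  have hcount : ((#S).choose m : ℝ) ≤
      ∑ i ∈ I, ∑ A ∈ S.powersetCard i, (#{B ∈ (S \ A).powersetCard (m - i) | P A B} : ℝ) := by
    exact_mod_cast choose_le_sum_card_filter_powersetCard hcover
  obtain ⟨i, hi, hsum⟩ := exists_div_card_le_of_le_sum hI hcount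
  have hne : (S.powersetCard i).Nonempty :=
    nonempty_of_sum_ne_zero (hpos.trans_le hsum).ne'
  obtain ⟨A, hA, hAcard⟩ := exists_div_card_le_of_le_sum hne hsum
  rw [card_powersetCard, div_div] at hAcard
  obtain ⟨hAS, rfl⟩ := mem_powersetCard.mp hA
  exact ⟨#A, hi, A, hAS, rfl, hAcard⟩

end Counting

theorem two_stabbing_lemma_general {V : Type*} [DecidableEq V] (E : Finset (Finset V))
    (d : ℕ) (hvc : IsTVCDim E 2 d) (S : Finset V) (hS : S ∈ E)
    (hcard : d + 1 ≤ S.card)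
    (hempty : ∀ X ⊆ S, X.card = d + 1 → TRealized E 2 X ∅) :
    ∃ i ∈ Finset.Icc 2 d, ∃ A ⊆ S, A.card = i ∧
      (S.card.choose (d + 1) : ℝ) / (((d : ℝ) - 1) * (S.card.choose i : ℝ)) ≤
        ((((S \ A).powersetCard (d + 1 - i)).filter (fun B => TStabs E 2 A B)).card : ℝ) := by
  have hcover : ∀ X ∈ S.powersetCard (d + 1), ∃ A ⊆ X, #A ∈ Icc 2 d ∧ TStabs E 2 A (X \ A) := by
    intro X hX
    obtain ⟨hXS, hXcard⟩ := mem_powersetCard.mp hX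
    have hXns : ¬ TShattered E 2 X := fun h ↦ (hvc.2 X h).not_gt (by omega)
    obtain ⟨A, hAX, h2A, hAcard, hstab⟩ :=
      exists_tStabs_sdiff_of_not_tShattered hS hXS (hempty X hXS hXcard) hXns
    exact ⟨A, hAX, mem_Icc.mpr ⟨h2A, by omega⟩, hstab⟩
  obtain ⟨i, hi, A, hAS, hAcard, hbound⟩ := exists_le_card_filter_powersetCard hcard hcover
  have hId : ((#(Icc 2 d) : ℕ) : ℝ) = d - 1 := by
    rw [Nat.card_Icc, Nat.cast_sub (by grind)]
    push_cast
    ring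
  rw [hId] at hbound
  exact ⟨i, hi, A, hAS, hAcard, hbound⟩

theorem two_stabbing_lemma {V : Type*} [Fintype V] [DecidableEq V] (E : Finset (Finset V))
    (d : ℕ) (hd : 2 ≤ d) (hvc : IsTVCDim E 2 d) (S : Finset V) (hS : S ∈ E)
    (hcard : d + 1 ≤ S.card)
    (hempty : ∀ X ⊆ S, X.card = d + 1 → TRealized E 2 X ∅) :
    ∃ i ∈ Finset.Icc 2 d, ∃ A ⊆ S, A.card = i ∧
      (S.card.choose (d + 1) : ℝ) / (((d : ℝ) - 1) * (S.card.choose i : ℝ)) ≤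
        ((((S \ A).powersetCard (d + 1 - i)).filter (fun B => TStabs E 2 A B)).card : ℝ) :=
  two_stabbing_lemma_general E d hvc S hS hcard hempty
end

section
/- Let t ≥ 2 be an integer, let H = (V,E) be a finite hypergraph with t-VC-dimension d ≥ t, and let S ∈ E be a hyperedge with |S| = k ≥ d+1. Assume that for every (d+1)-element subset X of S, the empty set is t-realized by H with respect to X. Then there exist an integer i ∈ {t,…,d} and an i-element subset A ⊆ S such that A t-stabs at least C(k,d+1)/((d−t+1)·C(k,i)) subsets B ⊆ S∖A of cardinality d+1−i. -/
theorem t_stabbing_lemma {V : Type*} [Fintype V] [DecidableEq V] (E : Finset (Finset V))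
    (t : ℕ) (ht : 2 ≤ t) (d : ℕ) (hd : t ≤ d) (hvc : IsTVCDim E t d)
    (S : Finset V) (hS : S ∈ E) (k : ℕ) (hk : S.card = k) (hcard : d + 1 ≤ k)
    (hempty : ∀ X ⊆ S, X.card = d + 1 → TRealized E t X ∅) :
    ∃ i ∈ Finset.Icc t d, ∃ A ⊆ S, A.card = i ∧
      (k.choose (d + 1) : ℝ) / (((d : ℝ) - (t : ℝ) + 1) * (k.choose i : ℝ)) ≤
        ((((S \ A).powersetCard (d + 1 - i)).filter (fun B => TStabs E t A B)).card : ℝ) := by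
  classical
  -- Key claim: every (d+1)-subset X of S admits A ⊆ X with t ≤ |A| ≤ d stabbing X \ A.
  have key : ∀ X ⊆ S, X.card = d + 1 →
      ∃ A ⊆ X, t ≤ A.card ∧ A.card ≤ d ∧ TStabs E t A (X \ A) := by
    intro X hXS hXcard
    have hns : ¬ TShattered E t X := by
      intro h
      have := hvc.2 X h
      omega
    simp only [TShattered, not_forall] at hns
    obtain ⟨T', hT'X, hnr⟩ := hns
    refine ⟨X \ T', Finset.sdiff_subset, ?_⟩
    have hXA : X \ (X \ T') = T' := sdiff_sdiff_eq_self hT'X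
    have hstab : TStabs E t (X \ T') T' := by
      intro e he hsub
      by_contra hlt
      push_neg at hlt
      apply hnr
      refine ⟨e ∩ (X \ T'), ?_, hlt, e, he, ?_⟩
      · exact (Finset.inter_subset_right).trans Finset.sdiff_subset
      · ext x
        simp only [Finset.mem_inter, Finset.mem_union, Finset.mem_sdiff]
        constructor
        · rintro ⟨hx1, hx2⟩
          by_cases hxt : x ∈ T'
          · exact Or.inl hxt
          · exact Or.inr ⟨hx2, hx1, hxt⟩
        · rintro (h | ⟨h1, h2, _⟩)
          · exact ⟨hT'X h, hsub h⟩
          · exact ⟨h2, h1⟩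
    have hAS : X \ T' ⊆ S := Finset.sdiff_subset.trans hXS
    have htA : t ≤ (X \ T').card := by
      have := hstab S hS (hT'X.trans hXS)
      rwa [Finset.inter_eq_right.mpr hAS] at this
    refine ⟨htA, ?_, by rwa [hXA]⟩
    -- |A| ≤ d, else A = X and T' = ∅, contradicting hempty
    by_contra hgt
    push_neg at hgt
    have hcardA : X.card ≤ (X \ T').card := by omega
    have hAX : X \ T' = X := Finset.eq_of_subset_of_card_le Finset.sdiff_subset hcardA
    have hT'empty : T' = ∅ := by
      rw [← hXA, hAX, Finset.sdiff_self]
    rw [hT'empty] at hnr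
    exact hnr (hempty X hXS hXcard)
  -- Counting argument
  set N : ℕ → Finset V → ℕ := fun i A =>
    (((S \ A).powersetCard (d + 1 - i)).filter (fun B => TStabs E t A B)).card with hN
  have hcover : S.powersetCard (d + 1) ⊆
      (Finset.Icc t d).biUnion (fun i => (S.powersetCard i).biUnion (fun A =>
        (((S \ A).powersetCard (d + 1 - i)).filter (fun B => TStabs E t A B)).image
          (fun B => A ∪ B))) := by
    intro X hX
    rw [Finset.mem_powersetCard] at hX
    obtain ⟨hXS, hXcard⟩ := hX
    obtain ⟨A, hAX, htA, hAd, hstab⟩ := key X hXS hXcard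
    simp only [Finset.mem_biUnion, Finset.mem_image, Finset.mem_filter,
      Finset.mem_powersetCard, Finset.mem_Icc]
    refine ⟨A.card, ⟨htA, hAd⟩, A, ⟨hAX.trans hXS, rfl⟩, X \ A, ⟨⟨?_, ?_⟩, hstab⟩, ?_⟩
    · exact Finset.sdiff_subset_sdiff hXS (le_refl A)
    · rw [Finset.card_sdiff_of_subset hAX, hXcard]
    · exact Finset.union_sdiff_of_subset hAX
  have hP : (S.powersetCard (d + 1)).card = k.choose (d + 1) := by
    rw [Finset.card_powersetCard, hk]
  have h1 : (S.powersetCard (d + 1)).card ≤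
      ∑ i ∈ Finset.Icc t d, ∑ A ∈ S.powersetCard i, N i A := by
    calc (S.powersetCard (d + 1)).card ≤ _ := Finset.card_le_card hcover
      _ ≤ ∑ i ∈ Finset.Icc t d, ((S.powersetCard i).biUnion (fun A =>
            (((S \ A).powersetCard (d + 1 - i)).filter (fun B => TStabs E t A B)).image
              (fun B => A ∪ B))).card := Finset.card_biUnion_le
      _ ≤ ∑ i ∈ Finset.Icc t d, ∑ A ∈ S.powersetCard i, N i A := by
          refine Finset.sum_le_sum fun i _ => ?_
          refine Finset.card_biUnion_le.trans (Finset.sum_le_sum fun A _ => ?_)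
          exact Finset.card_image_le
  by_contra hcon
  push_neg at hcon
  have hDpos : (0 : ℝ) < (d : ℝ) - (t : ℝ) + 1 := by
    have : (t : ℝ) ≤ (d : ℝ) := by exact_mod_cast hd
    linarith
  have hIccne : (Finset.Icc t d).Nonempty := Finset.nonempty_Icc.mpr hd
  have hchain : (k.choose (d + 1) : ℝ) < (k.choose (d + 1) : ℝ) := by
    calc (k.choose (d + 1) : ℝ) = ((S.powersetCard (d + 1)).card : ℝ) := by rw [hP]
      _ ≤ ((∑ i ∈ Finset.Icc t d, ∑ A ∈ S.powersetCard i, N i A : ℕ) : ℝ) := by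
          exact_mod_cast h1
      _ = ∑ i ∈ Finset.Icc t d, ∑ A ∈ S.powersetCard i, (N i A : ℝ) := by
          push_cast; ring
      _ < ∑ i ∈ Finset.Icc t d,
            (k.choose (d + 1) : ℝ) / ((d : ℝ) - (t : ℝ) + 1) := by
          refine Finset.sum_lt_sum_of_nonempty hIccne fun i hi => ?_
          rw [Finset.mem_Icc] at hi
          have hik : i ≤ k := le_trans (le_trans hi.2 (Nat.le_succ d)) hcard
          have hchoosepos : (0 : ℝ) < (k.choose i : ℝ) := by
            exact_mod_cast Nat.choose_pos hik
          have hne : (S.powersetCard i).Nonempty := by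
            apply Finset.powersetCard_nonempty.mpr
            rw [hk]; exact hik
          calc ∑ A ∈ S.powersetCard i, (N i A : ℝ)
              < ∑ A ∈ S.powersetCard i,
                  (k.choose (d + 1) : ℝ) / (((d : ℝ) - (t : ℝ) + 1) * (k.choose i : ℝ)) := by
                refine Finset.sum_lt_sum_of_nonempty hne fun A hA => ?_
                rw [Finset.mem_powersetCard] at hA
                exact hcon i (Finset.mem_Icc.mpr hi) A hA.1 hA.2
            _ = (k.choose (d + 1) : ℝ) / ((d : ℝ) - (t : ℝ) + 1) := by
                rw [Finset.sum_const, Finset.card_powersetCard, hk, nsmul_eq_mul]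
                field_simp
      _ = (k.choose (d + 1) : ℝ) := by
          rw [Finset.sum_const, Nat.card_Icc, nsmul_eq_mul]
          have : ((d + 1 - t : ℕ) : ℝ) = (d : ℝ) - (t : ℝ) + 1 := by
            have : t ≤ d + 1 := by omega
            push_cast [Nat.cast_sub this]
            ring
          rw [this]
          field_simp
  exact absurd hchain (lt_irrefl _)
end

section
/- For every finite hypergraph H, the 2-VC-dimension of H is at most 2·VC(H) + 1. -/
theorem two_vc_dim_le {V : Type*} [Fintype V] [DecidableEq V] (E : Finset (Finset V))
    (d d₂ : ℕ) (hvc : IsVCDim E d) (hvc2 : IsTVCDim E 2 d₂) :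
    d₂ ≤ 2 * d + 1 := by
  obtain ⟨⟨T, hT, rfl⟩, -⟩ := hvc2
  obtain ⟨-, hmax⟩ := hvc
  rcases le_or_gt T.card (d + 1) with h | h
  · omega
  · -- pick S ⊆ T with |S| = d+1; it is not shattered
    obtain ⟨S, hST, hScard⟩ := Finset.exists_subset_card_eq (s := T) (n := d + 1) (by omega)
    have hSnot : ¬ Shatters E S := fun hs => by
      have := hmax S hs; omega
    rw [Shatters] at hSnot
    push_neg at hSnot
    obtain ⟨β, hβS, hβmiss⟩ := hSnot
    have hR : Shatters E (T \ S) := by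
      intro X hXR
      have hsub : β ∪ X ⊆ T :=
        Finset.union_subset (hβS.trans hST) (hXR.trans (Finset.sdiff_subset))
      obtain ⟨W, hWT, hWcard, e, heE, heq⟩ := hT (β ∪ X) hsub
      have hSe : S ∩ e = β ∪ (S ∩ W) := by
        have h1 : S ∩ e = S ∩ (T ∩ e) := by
          rw [← Finset.inter_assoc, Finset.inter_eq_left.mpr hST]
        rw [h1, heq, Finset.inter_union_distrib_left, Finset.inter_union_distrib_left]
        have hSβ : S ∩ β = β := Finset.inter_eq_right.mpr hβS
        have hSX : S ∩ X = ∅ := by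
          rw [← Finset.disjoint_iff_inter_eq_empty]
          exact Finset.disjoint_of_subset_right hXR Finset.disjoint_sdiff
        rw [hSβ, hSX, Finset.union_empty]
      have hnsub : ¬ (S ∩ W ⊆ β) := by
        intro hsub'
        exact hβmiss e heE (by rw [hSe, Finset.union_eq_left.mpr hsub'])
      obtain ⟨w, hwSW, hwβ⟩ := Finset.not_subset.mp hnsub
      have hwS : w ∈ S := (Finset.mem_inter.mp hwSW).1
      have hwW : w ∈ W := (Finset.mem_inter.mp hwSW).2
      have hWsing : W = {w} := by
        apply Finset.eq_singleton_iff_unique_mem.mpr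
        refine ⟨hwW, fun y hy => ?_⟩
        by_contra hne'
        have : 1 < W.card := Finset.one_lt_card.mpr ⟨y, hy, w, hwW, hne'⟩
        omega
      refine ⟨e, heE, ?_⟩
      have h1 : (T \ S) ∩ e = (T \ S) ∩ (T ∩ e) := by
        rw [← Finset.inter_assoc, Finset.inter_eq_left.mpr Finset.sdiff_subset]
      rw [h1, heq, Finset.inter_union_distrib_left, Finset.inter_union_distrib_left]
      have hβ' : (T \ S) ∩ β = ∅ := by
        rw [← Finset.disjoint_iff_inter_eq_empty]
        exact Finset.disjoint_of_subset_right hβS Finset.sdiff_disjoint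
      have hW' : (T \ S) ∩ W = ∅ := by
        rw [hWsing, ← Finset.disjoint_iff_inter_eq_empty]
        simp [Finset.mem_sdiff, hwS]
      have hX' : (T \ S) ∩ X = X := Finset.inter_eq_right.mpr hXR
      rw [hβ', hW', hX', Finset.empty_union, Finset.union_empty]
    have hRcard : (T \ S).card ≤ d := hmax _ hR
    have hcard : (T \ S).card = T.card - (d + 1) := by
      rw [Finset.card_sdiff_of_subset hST, hScard]
    omega
end

section
/- Let m ≥ 1 and t ≥ 1 be integers and let P be a finite set of points in ℝ^m. Let H be the hypergraph with vertex set P whose hyperedges are the sets P ∩ h, where h ranges over all closed halfspaces {x ∈ ℝ^m : ⟨a,x⟩ ≤ b} (a ∈ ℝ^m, a ≠ 0, b ∈ ℝ). Then the t-VC-dimension of H is at most t·(m+1). -/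
/-!
Were `T` larger than `t (m + 1)`, Tverberg's theorem would split it into `t + 1` parts whose
convex hulls share a point `y`. A halfspace containing the first part contains `y`, hence meets
each of the other `t` parts, so the first part is realized only together with `t` further points.

Tverberg's theorem follows from the colorful Carathéodory theorem by Sarkaria's lifting of
`x ∈ ℝ^m` to the vectors `u_p ⊗ (x, 1)`. For colorful Carathéodory, take a point `z` of least
norm in the convex hulls of all transversals. If `z ≠ 0`, the points of its transversal that
carry `z` lie on the hyperplane `⟪z, ·⟫ = ‖z‖²`, so at most `dim E` of them are needed; swapping
in, for an unused colour, a point with `⟪z, ·⟫ ≤ 0` gives a transversal whose hull comes closer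
to `0`.
-/

/-- `T'` is `t`-realized by the hyperedge family `E` (a set of finsets) with respect to `T`. -/
def TRealizedSet {V : Type*} [DecidableEq V] (E : Set (Finset V)) (t : ℕ)
    (T T' : Finset V) : Prop :=
  ∃ W ⊆ T, W.card < t ∧ ∃ e ∈ E, T ∩ e = T' ∪ W

/-- `T` is `t`-shattered by the hyperedge family `E`. -/
def TShatteredSet {V : Type*} [DecidableEq V] (E : Set (Finset V)) (t : ℕ)
    (T : Finset V) : Prop :=
  ∀ T' ⊆ T, TRealizedSet E t T T'

/-- The hyperedges induced on a finite point set `P ⊆ ℝ^m` by all closed halfspaces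
`{x : ⟨a,x⟩ ≤ b}` with `a ≠ 0`. -/
def halfspaceEdges (m : ℕ) (P : Finset (Fin m → ℝ)) : Set (Finset {p : Fin m → ℝ // p ∈ P}) :=
  {s | ∃ (a : Fin m → ℝ) (b : ℝ), a ≠ 0 ∧
    s = Finset.univ.filter (fun p : {p : Fin m → ℝ // p ∈ P} => ∑ i, a i * p.1 i ≤ b)}

open Finset
open scoped RealInnerProductSpace

theorem AffineIndependent.card_le_finrank_of_apply_eq {K V ι : Type*} [Field K] [AddCommGroup V]
    [Module K V] [FiniteDimensional K V] [Fintype ι] {f : Module.Dual K V} (hf : f ≠ 0)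
    {p : ι → V} (hp : AffineIndependent K p) {c : K} (hc : ∀ i, f (p i) = c) :
    Fintype.card ι ≤ Module.finrank K V := by
  cases isEmpty_or_nonempty ι
  · simp
  have hspan : vectorSpan K (Set.range p) ≤ LinearMap.ker f := by
    rw [vectorSpan_def, Submodule.span_le]
    rintro - ⟨-, ⟨i, rfl⟩, -, ⟨i', rfl⟩, rfl⟩
    simp [hc]
  have := Submodule.finrank_mono hspan
  rw [← hp.finrank_vectorSpan_add_one, ← Module.Dual.finrank_ker_add_one_of_ne_zero hf]
  omega

theorem eq_of_sum_mul_eq_of_le {ι : Type*} [Fintype ι] {w g : ι → ℝ} {c : ℝ}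
    (hw : ∀ i, 0 < w i) (hw₁ : ∑ i, w i = 1) (hle : ∀ i, c ≤ g i)
    (hsum : ∑ i, w i * g i = c) (i : ι) : g i = c := by
  have hsum' : ∑ i, w i * c = ∑ i, w i * g i := by rw [← sum_mul, hw₁, one_mul, hsum]
  have := (sum_eq_sum_iff_of_le fun i _ => mul_le_mul_of_nonneg_left (hle i) (hw i).le).1
    hsum' i (mem_univ i)
  exact (mul_left_cancel₀ (hw i).ne' this).symm

section InnerProductSpace
variable {E : Type*} [NormedAddCommGroup E] [InnerProductSpace ℝ E]

theorem norm_sq_le_inner_of_isMinOn {K : Set E} (hK : Convex ℝ K) {z y : E} (hz : z ∈ K)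
    (hmin : IsMinOn (‖·‖) K z) (hy : y ∈ K) : ‖z‖ ^ 2 ≤ ⟪z, y⟫ := by
  have : Nonempty K := ⟨⟨z, hz⟩⟩
  have hinf : ‖0 - z‖ = ⨅ w : K, ‖0 - (w : E)‖ := by
    simp only [zero_sub, norm_neg]
    refine le_antisymm (le_ciInf fun w => hmin w.2) (ciInf_le ?_ (⟨z, hz⟩ : K))
    exact ⟨0, by rintro - ⟨w, rfl⟩; positivity⟩
  have := (norm_eq_iInf_iff_real_inner_le_zero hK hz).1 hinf y hy
  rw [zero_sub, inner_neg_left, inner_sub_right, real_inner_self_eq_norm_sq] at this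
  linarith

theorem exists_finset_card_le_finrank_of_norm_sq_le_inner [FiniteDimensional ℝ E] {κ : Type*}
    {g : κ → E} {z : E} (hz : z ∈ convexHull ℝ (Set.range g)) (hz₀ : z ≠ 0)
    (hle : ∀ i, ‖z‖ ^ 2 ≤ ⟪z, g i⟫) :
    ∃ S : Finset κ, S.card ≤ Module.finrank ℝ E ∧ z ∈ convexHull ℝ (g '' S) := by
  classical
  obtain ⟨ι, _, y, w, hy, hind, hw, hw₁, hwz⟩ := eq_pos_convex_span_of_mem_convexHull hz
  choose pre hpre using fun i => hy (Set.mem_range_self i)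
  have hplane (i) : ⟪z, y i⟫ = ‖z‖ ^ 2 := by
    refine eq_of_sum_mul_eq_of_le hw hw₁ (fun i => hpre i ▸ hle (pre i)) ?_ i
    simp_rw [← real_inner_smul_right, ← inner_sum, hwz, real_inner_self_eq_norm_sq]
  refine ⟨univ.image pre, card_image_le.trans ?_, ?_⟩
  · refine hind.card_le_finrank_of_apply_eq (f := innerₛₗ ℝ z) ?_ hplane
    exact fun h => hz₀ (inner_self_eq_zero.1 (LinearMap.congr_fun h z))
  · rw [← hwz]
    refine (convex_convexHull ℝ _).sum_mem (fun i _ => (hw i).le) hw₁ fun i _ => ?_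
    exact subset_convexHull ℝ _ ⟨pre i, by simp, hpre i⟩

theorem colorful_caratheodory_of_innerProductSpace [FiniteDimensional ℝ E] {κ : Type*}
    [Fintype κ] (hκ : Module.finrank ℝ E < Fintype.card κ) (C : κ → Finset E)
    (hC : ∀ i, (0 : E) ∈ convexHull ℝ (C i : Set E)) :
    ∃ f : κ → E, (∀ i, f i ∈ C i) ∧ (0 : E) ∈ convexHull ℝ (Set.range f) := by
  classical
  have : Nonempty κ := Fintype.card_pos_iff.1 (by omega)
  have : Nonempty (∀ i, C i) :=
    ⟨fun i => ⟨_, (convexHull_nonempty_iff.1 ⟨0, hC i⟩).some_mem⟩⟩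
  let K (f : ∀ i, C i) : Set E := convexHull ℝ (Set.range fun i => (f i : E))
  have hK : IsCompact (⋃ f, K f) :=
    isCompact_iUnion fun f => (Set.finite_range _).isCompact_convexHull (𝕜 := ℝ)
  obtain ⟨z, hzK, hmin⟩ := hK.exists_isMinOn
    (Set.nonempty_iUnion.2 ⟨Classical.arbitrary _, (Set.range_nonempty _).convexHull⟩)
    continuous_norm.continuousOn
  have hminK (f) : IsMinOn (‖·‖) (K f) z := hmin.on_subset (Set.subset_iUnion K f)
  obtain ⟨f₀, hz₀⟩ := Set.mem_iUnion.1 hzK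
  by_cases hz : z = 0
  · exact ⟨fun i => f₀ i, fun i => (f₀ i).2, hz ▸ hz₀⟩
  exfalso
  obtain ⟨S, hS, hzS⟩ := exists_finset_card_le_finrank_of_norm_sq_le_inner hz₀ hz fun i =>
    norm_sq_le_inner_of_isMinOn (convex_convexHull ℝ _) hz₀ (hminK f₀)
      (subset_convexHull ℝ _ (Set.mem_range_self i))
  obtain ⟨i₀, -, hi₀⟩ := exists_mem_notMem_of_card_lt_card (s := S) (t := univ)
    (by simpa using hS.trans_lt hκ)
  obtain ⟨p, hpC, hp⟩ : ∃ p ∈ (C i₀ : Set E), ⟪z, p⟫ ≤ 0 := by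
    simpa using ((innerₛₗ ℝ z).concaveOn convex_univ).exists_le_of_mem_convexHull
      (Set.subset_univ _) (hC i₀)
  let f₁ := Function.update f₀ i₀ ⟨p, hpC⟩
  have hz₁ : z ∈ K f₁ := by
    refine convexHull_mono ?_ hzS
    rintro - ⟨i, hi, rfl⟩
    exact ⟨i, by simp [f₁, Function.update_of_ne (ne_of_mem_of_not_mem hi hi₀)]⟩
  have hp₁ : p ∈ K f₁ := subset_convexHull ℝ _ ⟨i₀, by simp [f₁]⟩
  have := norm_sq_le_inner_of_isMinOn (convex_convexHull ℝ _) hz₁ (hminK f₁) hp₁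
  have : 0 < ‖z‖ ^ 2 := by positivity
  linarith

end InnerProductSpace

theorem colorful_caratheodory {E : Type*} [AddCommGroup E] [Module ℝ E] [FiniteDimensional ℝ E]
    {κ : Type*} [Fintype κ] (hκ : Module.finrank ℝ E < Fintype.card κ) (C : κ → Finset E)
    (hC : ∀ i, (0 : E) ∈ convexHull ℝ (C i : Set E)) :
    ∃ f : κ → E, (∀ i, f i ∈ C i) ∧ (0 : E) ∈ convexHull ℝ (Set.range f) := by
  classical
  let e : E ≃ₗ[ℝ] EuclideanSpace ℝ (Fin (Module.finrank ℝ E)) :=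
    LinearEquiv.ofFinrankEq _ _ (by simp)
  obtain ⟨f, hfC, hf⟩ := colorful_caratheodory_of_innerProductSpace (by simpa using hκ)
    (fun i => (C i).image e) fun i => by
      have h := e.toLinearMap.image_convexHull (C i : Set E)
      rw [LinearEquiv.coe_coe] at h
      rw [coe_image, ← h]
      exact ⟨0, hC i, map_zero e⟩
  refine ⟨e.symm ∘ f, fun i => ?_, ?_⟩
  · obtain ⟨x, hx, hxf⟩ := mem_image.1 (hfC i)
    simpa [← hxf] using hx
  · have h := e.symm.toLinearMap.image_convexHull (Set.range f)
    rw [LinearEquiv.coe_coe] at h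
    rw [Set.range_comp, ← h]
    exact ⟨0, hf, map_zero _⟩

section Sarkaria
variable {M : Type*} [AddCommGroup M] [Module ℝ M] (t : ℕ)

/-- Tensoring with the vectors `u₀, …, u_t ∈ ℝ^t`, where `u_k = e_k` for `k < t` and
`u_t = -(e₀ + ⋯ + e_{t-1})`. -/
def sarkariaLift (p : Fin (t + 1)) : M →ₗ[ℝ] Fin t → M :=
  LinearMap.pi fun k =>
    ((if p = k.castSucc then 1 else 0) - (if p = Fin.last t then 1 else 0) : ℝ) • LinearMap.id

variable {t}

theorem sum_sarkariaLift_apply (σ : Fin (t + 1) → M) (k : Fin t) :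
    (∑ p, sarkariaLift t p (σ p)) k = σ k.castSucc - σ (Fin.last t) := by
  simp only [sarkariaLift, Finset.sum_apply, LinearMap.pi_apply, LinearMap.smul_apply,
    LinearMap.id_apply]
  simp [sub_smul, ite_smul, sum_sub_distrib]

theorem sum_sarkariaLift_eq_zero_iff (σ : Fin (t + 1) → M) :
    ∑ p, sarkariaLift t p (σ p) = 0 ↔ ∀ p, σ p = σ (Fin.last t) := by
  simp only [funext_iff, sum_sarkariaLift_apply, Pi.zero_apply, sub_eq_zero, Fin.forall_fin_succ']
  simp

end Sarkaria

theorem zero_mem_convexHull_range_of_sum_eq_zero {M ι : Type*} [AddCommGroup M] [Module ℝ M]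
    [Fintype ι] [Nonempty ι] {v : ι → M} (h : ∑ i, v i = 0) :
    (0 : M) ∈ convexHull ℝ (Set.range v) := by
  have := (convex_convexHull ℝ (Set.range v)).sum_mem (t := univ)
    (w := fun _ => (Fintype.card ι : ℝ)⁻¹) (fun _ _ => by positivity)
    (by simp [Fintype.card_ne_zero]) fun i _ => subset_convexHull ℝ _ ⟨i, rfl⟩
  rwa [← smul_sum, h, smul_zero] at this

section Tverberg
variable {E ι : Type*} [AddCommGroup E] [Module ℝ E]

theorem exists_forall_mem_convexHull_fiber_of_lift_sum_eq {κ : Type*} [Fintype κ]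
    [DecidableEq κ] {s : Finset ι} {lam : ι → ℝ} (hlam₀ : ∀ i ∈ s, 0 ≤ lam i)
    (hlam₁ : ∑ i ∈ s, lam i = 1) {x : ι → E} {j : ι → κ} {q : κ}
    (hσ : ∀ p, ∑ i ∈ s with j i = p, lam i • (x i, (1 : ℝ)) =
      ∑ i ∈ s with j i = q, lam i • (x i, (1 : ℝ))) :
    ∃ y, ∀ p, y ∈ convexHull ℝ (x '' {i | j i = p}) := by
  have hweight (p) : ∑ i ∈ s with j i = p, lam i = ∑ i ∈ s with j i = q, lam i := by
    simpa [Prod.snd_sum] using congrArg Prod.snd (hσ p)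
  have hpos : 0 < ∑ i ∈ s with j i = q, lam i := by
    refine (sum_nonneg fun i hi => hlam₀ i (mem_filter.1 hi).1).lt_of_ne fun h => ?_
    have := sum_fiberwise s j lam
    simp_rw [hweight, ← h, sum_const_zero, hlam₁] at this
    exact zero_ne_one this
  refine ⟨(s.filter (j · = q)).centerMass lam x, fun p => ?_⟩
  have hcenter :
      (s.filter (j · = p)).centerMass lam x = (s.filter (j · = q)).centerMass lam x := by
    have := congrArg Prod.fst (hσ p)
    simp only [Prod.fst_sum, Prod.smul_fst] at this
    rw [centerMass, centerMass, hweight, this]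
  rw [← hcenter]
  exact centerMass_mem_convexHull _ (fun i hi => hlam₀ i (mem_filter.1 hi).1) (hweight p ▸ hpos)
    fun i hi => ⟨i, (mem_filter.1 hi).2, rfl⟩

theorem tverberg [FiniteDimensional ℝ E] [Fintype ι] {t : ℕ}
    (hι : t * (Module.finrank ℝ E + 1) < Fintype.card ι) (x : ι → E) :
    ∃ (j : ι → Fin (t + 1)) (y : E), ∀ p, y ∈ convexHull ℝ (x '' {i | j i = p}) := by
  classical
  let v (i : ι) : E × ℝ := (x i, 1)
  obtain ⟨f, hfC, hf⟩ := colorful_caratheodory (E := Fin t → E × ℝ)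
    (by simpa [Module.finrank_pi_fintype, Module.finrank_prod] using hι)
    (fun i => univ.image fun p => sarkariaLift t p (v i)) fun i => by
      rw [coe_image, coe_univ, Set.image_univ]
      exact zero_mem_convexHull_range_of_sum_eq_zero
        ((sum_sarkariaLift_eq_zero_iff _).2 fun _ => rfl)
  choose j hj using fun i => (by simpa using hfC i : ∃ p, sarkariaLift t p (v i) = f i)
  obtain ⟨s, lam, hlam₀, hlam₁, hlam⟩ :=
    (convexHull_range_eq_exists_affineCombination f).subset hf
  rw [s.affineCombination_eq_linear_combination _ _ hlam₁] at hlam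
  refine ⟨j, exists_forall_mem_convexHull_fiber_of_lift_sum_eq hlam₀ hlam₁ (q := Fin.last t)
    ((sum_sarkariaLift_eq_zero_iff _).1 ?_)⟩
  calc ∑ p, sarkariaLift t p (∑ i ∈ s with j i = p, lam i • v i)
      = ∑ p, ∑ i ∈ s with j i = p, lam i • sarkariaLift t (j i) (v i) := by
        refine sum_congr rfl fun p _ => ?_
        rw [map_sum]
        refine sum_congr rfl fun i hi => ?_
        rw [map_smul, (mem_filter.1 hi).2]
    _ = ∑ i ∈ s, lam i • f i := by simp_rw [sum_fiberwise, hj]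
    _ = 0 := hlam

end Tverberg

theorem t_vc_dim_halfspaces_le_general (m t : ℕ)
    (P : Finset (Fin m → ℝ)) (T : Finset {p : Fin m → ℝ // p ∈ P})
    (hT : TShatteredSet (halfspaceEdges m P) t T) :
    T.card ≤ t * (m + 1) := by
  classical
  by_contra! hcard
  obtain ⟨j, y, hy⟩ := tverberg (E := Fin m → ℝ) (ι := T) (t := t) (by simpa using hcard)
    fun q => q.1.1
  obtain ⟨W, -, hW, -, ⟨a, b, -, rfl⟩, hTe⟩ :=
    hT ((univ.filter (j · = 0)).map (Function.Embedding.subtype _))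
      fun _ => property_of_mem_map_subtype _
  let f := dotProductBilin ℝ ℝ a
  have hmem (q : T) : f q.1.1 ≤ b ↔ j q = 0 ∨ q.1 ∈ W := by
    simpa [f, dotProduct, q.2] using congrArg (q.1 ∈ ·) hTe
  have hyb : f y ≤ b := by
    refine convexHull_min ?_ (convex_halfSpace_le f.isLinear b) (hy 0)
    rintro - ⟨q, hq, rfl⟩
    exact (hmem q).2 (Or.inl hq)
  have hpart (p : Fin (t + 1)) : ∃ q : T, j q = p ∧ f q.1.1 ≤ b := by
    obtain ⟨-, ⟨q, hq, rfl⟩, hqb⟩ :=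
      (f.concaveOn convex_univ).exists_le_of_mem_convexHull (Set.subset_univ _) (hy p)
    exact ⟨q, hq, hqb.trans hyb⟩
  choose g hgj hgb using hpart
  have hgW (p) (hp : p ∈ univ.erase 0) : (g p).1 ∈ W :=
    ((hmem _).1 (hgb p)).resolve_left fun h => ne_of_mem_erase hp ((hgj p).symm.trans h)
  have := card_le_card_of_injOn (fun p => (g p).1) hgW fun p _ p' _ h => by
    rw [← hgj p, ← hgj p', Subtype.val_injective h]
  simp only [mem_univ, card_erase_of_mem, card_univ, Fintype.card_fin, add_tsub_cancel_right]
    at this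
  omega

theorem t_vc_dim_halfspaces_le (m t : ℕ) (hm : 1 ≤ m) (ht : 1 ≤ t)
    (P : Finset (Fin m → ℝ)) (T : Finset {p : Fin m → ℝ // p ∈ P})
    (hT : TShatteredSet (halfspaceEdges m P) t T) :
    T.card ≤ t * (m + 1) :=
  t_vc_dim_halfspaces_le_general m t P T hT
end

section
/- For every even integer n ≥ 2 there exists a set P of n points in ℝ² with the following property: taking F to be the family of all frames and ε = 2/n, every ε-2-net for the intersection hypergraph H(P,F) has at least n²/4 elements. -/
/-- A frame is the boundary of an axis-parallel rectangle in `ℝ²`. -/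
def IsFrame (f : Set (ℝ × ℝ)) : Prop :=
  ∃ a b c d : ℝ, a < b ∧ c < d ∧
    f = {q : ℝ × ℝ | a ≤ q.1 ∧ q.1 ≤ b ∧ c ≤ q.2 ∧ q.2 ≤ d ∧
          (q.1 = a ∨ q.1 = b ∨ q.2 = c ∨ q.2 = d)}

theorem frames_eps_two_net_lower_bound (n : ℕ) (hn : 2 ≤ n) (heven : Even n) :
    ∃ P : Finset (ℝ × ℝ), P.card = n ∧
      ∀ S : Finset (Finset (ℝ × ℝ)),
        (∀ s ∈ S, s.card = 2 ∧ s ⊆ P) →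
        (∀ f : Set (ℝ × ℝ), IsFrame f →
          (2 / (n : ℝ)) * (P.card : ℝ) ≤ ((((P : Set (ℝ × ℝ)) ∩ f).ncard : ℝ)) →
          ∃ s ∈ S, (s : Set (ℝ × ℝ)) ⊆ f) →
        (n : ℝ) ^ 2 / 4 ≤ (S.card : ℝ) := by
  classical
  have hnR : (2:ℝ) ≤ (n:ℝ) := by exact_mod_cast hn
  have hn0 : (0:ℝ) < (n:ℝ) := by linarith
  set pt : ℕ → ℝ × ℝ := fun i => ((i:ℝ), (i:ℝ)) with hpt
  have hinj : Function.Injective pt := by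
    intro a b h
    have : (a:ℝ) = (b:ℝ) := congrArg Prod.fst h
    exact_mod_cast this
  set P : Finset (ℝ × ℝ) := (Finset.range n).image pt with hP
  have hPcard : P.card = n := by
    rw [hP, Finset.card_image_of_injective _ hinj, Finset.card_range]
  refine ⟨P, hPcard, ?_⟩
  intro S hS hnet
  -- key step: every pair is in S
  have key : ∀ i j : ℕ, i < n → j < n → i < j → ({pt i, pt j} : Finset (ℝ × ℝ)) ∈ S := by
    intro i j hi hj hij
    have hijR : (i:ℝ) < (j:ℝ) := by exact_mod_cast hij
    set F : Set (ℝ × ℝ) := {q : ℝ × ℝ | (i:ℝ) ≤ q.1 ∧ q.1 ≤ (j:ℝ) ∧ (i:ℝ) ≤ q.2 ∧ q.2 ≤ (j:ℝ) ∧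
          (q.1 = (i:ℝ) ∨ q.1 = (j:ℝ) ∨ q.2 = (i:ℝ) ∨ q.2 = (j:ℝ))} with hF
    have hFrame : IsFrame F := ⟨i, j, i, j, hijR, hijR, rfl⟩
    have hset : (P : Set (ℝ × ℝ)) ∩ F = {pt i, pt j} := by
      ext q
      constructor
      · rintro ⟨hqP, hqF⟩
        rcases Finset.mem_image.mp (by exact_mod_cast hqP) with ⟨k, hk, rfl⟩
        obtain ⟨_, _, _, _, hd⟩ := hqF
        have : (k:ℝ) = (i:ℝ) ∨ (k:ℝ) = (j:ℝ) := by tauto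
        rcases this with h | h
        · left; simp [pt, h]
        · right; simp [pt, h]
      · intro hq
        rcases hq with rfl | rfl
        · refine ⟨by exact_mod_cast Finset.mem_image_of_mem pt (Finset.mem_range.mpr hi), ?_⟩
          exact ⟨le_refl _, le_of_lt hijR, le_refl _, le_of_lt hijR, Or.inl rfl⟩
        · refine ⟨by exact_mod_cast Finset.mem_image_of_mem pt (Finset.mem_range.mpr hj), ?_⟩
          exact ⟨le_of_lt hijR, le_refl _, le_of_lt hijR, le_refl _, Or.inr (Or.inl rfl)⟩
    have hne : pt i ≠ pt j := fun h => (Nat.lt_irrefl i (hinj h ▸ hij))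
    have hncard : ((P : Set (ℝ × ℝ)) ∩ F).ncard = 2 := by
      rw [hset]; exact Set.ncard_pair hne
    have hle : (2 / (n : ℝ)) * (P.card : ℝ) ≤ (((P : Set (ℝ × ℝ)) ∩ F).ncard : ℝ) := by
      rw [hncard, hPcard]
      rw [div_mul_cancel₀ _ (ne_of_gt hn0)]
      norm_num
    obtain ⟨s, hsS, hsF⟩ := hnet F hFrame hle
    obtain ⟨hs2, hsP⟩ := hS s hsS
    have hsub : s ⊆ ({pt i, pt j} : Finset (ℝ × ℝ)) := by
      intro x hx
      have hxF : x ∈ F := hsF hx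
      have hxP : x ∈ (P : Set (ℝ × ℝ)) := hsP hx
      have : x ∈ (P : Set (ℝ × ℝ)) ∩ F := ⟨hxP, hxF⟩
      rw [hset] at this
      simpa using this
    have hcard2 : ({pt i, pt j} : Finset (ℝ × ℝ)).card = 2 := Finset.card_pair hne
    have : s = ({pt i, pt j} : Finset (ℝ × ℝ)) :=
      Finset.eq_of_subset_of_card_le hsub (by rw [hcard2, hs2])
    rwa [← this]
  -- injection from 2-subsets of range n into S
  have hmap : ∀ t ∈ (Finset.range n).powersetCard 2, t.image pt ∈ S := by
    intro t ht
    obtain ⟨hsub, hcard⟩ := Finset.mem_powersetCard.mp ht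
    obtain ⟨i, j, hij, rfl⟩ := Finset.card_eq_two.mp hcard
    have hi : i < n := Finset.mem_range.mp (hsub (by simp))
    have hj : j < n := Finset.mem_range.mp (hsub (by simp))
    rcases lt_or_gt_of_ne hij with h | h
    · have := key i j hi hj h
      simpa [Finset.image_insert] using this
    · have := key j i hj hi h
      have hcomm : ({pt i, pt j} : Finset (ℝ × ℝ)) = {pt j, pt i} := Finset.pair_comm _ _
      simpa [Finset.image_insert, hcomm] using this
  have hinjOn : Set.InjOn (fun t : Finset ℕ => t.image pt)
      ((Finset.range n).powersetCard 2 : Finset (Finset ℕ)) := by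
    intro t₁ _ t₂ _ h
    exact Finset.image_injective hinj h
  have hcardle : ((Finset.range n).powersetCard 2).card ≤ S.card :=
    Finset.card_le_card_of_injOn _ hmap hinjOn
  have hchoose : ((Finset.range n).powersetCard 2).card = n.choose 2 := by
    rw [Finset.card_powersetCard, Finset.card_range]
  rw [hchoose] at hcardle
  have hfinal : ((n.choose 2 : ℕ) : ℝ) ≤ (S.card : ℝ) := by exact_mod_cast hcardle
  have hc2 : ((n.choose 2 : ℕ) : ℝ) = (n:ℝ) * ((n:ℝ) - 1) / 2 := Nat.cast_choose_two (K := ℝ) n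
  rw [hc2] at hfinal
  nlinarith [hfinal, hnR]
end

section
/- Let G be a finite simple graph that does not contain two disjoint edges as an induced subgraph; that is, there are no four distinct vertices a, b, c, d such that ab and cd are edges of G while none of ac, ad, bc, bd is an edge of G. Then the chromatic number of G satisfies χ(G) ≤ ω(G)·(ω(G)+1)/2, where ω(G) is the clique number of G. -/
/-!
Fix a maximum clique `K`, of size `ω`. By maximality every vertex `v` has a non-neighbour in `K`
(possibly `v` itself). Colour `v` by an unordered pair `{x, y}` of its non-neighbours in `K`, with
`x = y` only when `x` is its unique one: there are `ω (ω + 1) / 2` such pairs. Adjacent `u`, `v`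
coloured `{x, y}` with `x ≠ y` would form, with the edge `xy` of `K`, an induced pair of disjoint
edges; if `x = y`, then `K - x + u + v` would be a clique larger than `K`.
-/

lemma exists_pair_eq_imp_unique {α : Type*} {p : α → Prop} (h : ∃ x, p x) :
    ∃ x y, p x ∧ p y ∧ (x = y → ∀ z, p z → z = x) := by
  obtain ⟨x, hx⟩ := h
  by_cases hu : ∀ z, p z → z = x
  · exact ⟨x, x, hx, hx, fun _ => hu⟩
  · push Not at hu
    obtain ⟨z, hz, hzx⟩ := hu
    exact ⟨x, z, hx, hz, fun h => absurd h.symm hzx⟩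

namespace SimpleGraph

variable {V : Type*} {G : SimpleGraph V}

/-- `2K₂` is the graph consisting of two disjoint edges. -/
def InducedTwoK2Free (G : SimpleGraph V) : Prop :=
  ¬ ∃ a b c d : V, a ≠ b ∧ a ≠ c ∧ a ≠ d ∧ b ≠ c ∧ b ≠ d ∧ c ≠ d ∧
    G.Adj a b ∧ G.Adj c d ∧ ¬G.Adj a c ∧ ¬G.Adj a d ∧ ¬G.Adj b c ∧ ¬G.Adj b d

lemma InducedTwoK2Free.adj_of_adj_of_adj (hG : G.InducedTwoK2Free) {a b c d : V}
    (hab : G.Adj a b) (hcd : G.Adj c d) :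
    G.Adj a c ∨ G.Adj a d ∨ G.Adj b c ∨ G.Adj b d := by
  by_contra! ⟨hac, had, hbc, hbd⟩
  refine hG ⟨a, b, c, d, hab.ne, ?_, ?_, ?_, ?_, hcd.ne, hab, hcd, hac, had, hbc, hbd⟩ <;>
    rintro rfl
  exacts [had hcd, hac hcd.symm, hbd hcd, hbc hcd.symm]

lemma cliqueFree_cliqueNum_add_one [Finite V] : G.CliqueFree (G.cliqueNum + 1) := by
  intro s hs
  have := IsClique.card_le_cliqueNum (tc := hs.isClique)
  rw [hs.card_eq] at this
  omega

variable {n : ℕ} {s : Finset V}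

lemma IsNClique.exists_not_adj (hs : G.IsNClique n s) (hG : G.CliqueFree (n + 1)) (v : V) :
    ∃ w ∈ s, ¬ G.Adj v w := by
  classical
  by_contra! h
  exact hG _ (hs.insert h)

/-- Otherwise `x` could be exchanged for the edge `uv`, enlarging the clique `s`. -/
lemma IsNClique.not_adj_of_unique_not_adj (hs : G.IsNClique n s) (hG : G.CliqueFree (n + 1))
    {u v x : V} (hx : x ∈ s) (hu : ∀ w ∈ s, ¬ G.Adj u w → w = x)
    (hv : ∀ w ∈ s, ¬ G.Adj v w → w = x) : ¬ G.Adj u v := by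
  classical
  have adj_of_ne {y : V} (hy : ∀ w ∈ s, ¬ G.Adj y w → w = x) : ∀ w ∈ s \ {x}, G.Adj y w := by
    intro w hw
    rw [Finset.mem_sdiff, Finset.mem_singleton] at hw
    by_contra h
    exact hw.2 (hy w hw.1 h)
  intro huv
  refine hG _ ((hs.insert_erase (a := v) (adj_of_ne hv) hx).insert (a := u) ?_)
  intro w hw
  rcases Finset.mem_insert.1 hw with rfl | hw
  · exact huv
  · exact adj_of_ne hu w (by simpa [Finset.sdiff_singleton_eq_erase] using hw)

theorem IsNClique.colorable_of_inducedTwoK2Free (hs : G.IsNClique n s)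
    (hG : G.CliqueFree (n + 1)) (h2K2 : G.InducedTwoK2Free) :
    G.Colorable (n * (n + 1) / 2) := by
  choose a b ha hb hab using fun v => exists_pair_eq_imp_unique (hs.exists_not_adj hG v)
  let color : G.Coloring s.sym2 :=
    Coloring.mk (fun v => ⟨s(a v, b v), Finset.mk_mem_sym2_iff.2 ⟨(ha v).1, (hb v).1⟩⟩) <| by
      intro u v huv hc
      have hc : s(a u, b u) = s(a v, b v) := congrArg Subtype.val hc
      by_cases hdiag : a u = b u
      · have hv : a v = a u ∧ b v = a u := by grind [Sym2.eq_iff]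
        refine hs.not_adj_of_unique_not_adj hG (ha u).1 (fun w hw hn => hab u hdiag w ⟨hw, hn⟩)
          (fun w hw hn => ?_) huv
        rw [← hv.1]
        exact hab v (hv.1.trans hv.2.symm) w ⟨hw, hn⟩
      · have hnv : ¬ G.Adj v (a u) ∧ ¬ G.Adj v (b u) := by
          rcases Sym2.eq_iff.1 hc with ⟨h1, h2⟩ | ⟨h1, h2⟩ <;> rw [h1, h2]
          exacts [⟨(ha v).2, (hb v).2⟩, ⟨(hb v).2, (ha v).2⟩]
        have hxy : G.Adj (a u) (b u) := hs.isClique (ha u).1 (hb u).1 hdiag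
        rcases h2K2.adj_of_adj_of_adj huv hxy with h | h | h | h
        exacts [(ha u).2 h, (hb u).2 h, hnv.1 h, hnv.2 h]
  have hcard : Fintype.card s.sym2 = n * (n + 1) / 2 := by
    rw [Fintype.card_coe, Finset.card_sym2, hs.card_eq, Nat.choose_two_right, Nat.mul_comm,
      Nat.add_sub_cancel]
  exact hcard ▸ color.colorable

end SimpleGraph

theorem chromatic_le_of_no_induced_two_disjoint_edges {V : Type*} [Fintype V]
    (G : SimpleGraph V)
    (h : ¬ ∃ a b c d : V, a ≠ b ∧ a ≠ c ∧ a ≠ d ∧ b ≠ c ∧ b ≠ d ∧ c ≠ d ∧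
      G.Adj a b ∧ G.Adj c d ∧ ¬G.Adj a c ∧ ¬G.Adj a d ∧ ¬G.Adj b c ∧ ¬G.Adj b d) :
    G.chromaticNumber ≤ (G.cliqueNum * (G.cliqueNum + 1) / 2 : ℕ) := by
  obtain ⟨s, hs⟩ := G.exists_isNClique_cliqueNum
  exact (hs.colorable_of_inducedTwoK2Free G.cliqueFree_cliqueNum_add_one h).chromaticNumber_le
end
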